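/- arXiv:2205.13110 — 8 statements merged into one kernel-verified Lean document; each statement's English description precedes it below -/
import Mathlib

section
/- There exists a constant C > 0 such that for every real κ ≥ 1 and every integer n, ∑_{m∈ℤ} 1/((κ² + 4π²m²)(κ² + 4π²(n+m)²)) ≤ C / (κ (4κ² + 4π²n²)). -/
open Real

/-! Write `a m = κ² + c m²`. Since `|n| ≤ |m| + |n + m| ≤ 2 max (|m|, |n + m|)`, the larger of
`a m` and `a (n + m)` is at least `D = κ² + c n² / 4`, so the `m`-th term is at most
`D⁻¹ (a m⁻¹ + a (n + m)⁻¹)`. Summing over `m` reduces the claim to `∑ₘ a m⁻¹ ≲ κ⁻¹`, which follows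
from `a (k + 1)⁻¹ ≤ 2 / ((κ + k) (κ + k + 1))` and telescoping. -/

lemma one_div_mul_le_of_le_max {a b D : ℝ} (ha : 0 < a) (hb : 0 < b) (hD : 0 < D)
    (h : D ≤ max a b) : 1 / (a * b) ≤ 1 / D * (1 / a + 1 / b) := by
  rcases le_total a b with hab | hab
  · rw [max_eq_right hab] at h
    calc 1 / (a * b) = 1 / a * (1 / b) := (one_div_mul_one_div a b).symm
      _ ≤ 1 / a * (1 / D) := by gcongr
      _ ≤ 1 / D * (1 / a + 1 / b) := by nlinarith [one_div_pos.2 hb, one_div_pos.2 hD]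
  · rw [max_eq_left hab] at h
    calc 1 / (a * b) = 1 / b * (1 / a) := by rw [one_div_mul_one_div, mul_comm]
      _ ≤ 1 / b * (1 / D) := by gcongr
      _ ≤ 1 / D * (1 / a + 1 / b) := by nlinarith [one_div_pos.2 ha, one_div_pos.2 hD]

lemma sq_sub_le_four_mul_max_sq (x y : ℝ) : (x - y) ^ 2 ≤ 4 * max (x ^ 2) (y ^ 2) := by
  nlinarith [sq_nonneg (x + y), le_max_left (x ^ 2) (y ^ 2), le_max_right (x ^ 2) (y ^ 2)]

lemma one_div_add_mul_succ_sq_le {κ c : ℝ} (hκ : 0 < κ) (hc : 1 ≤ c) (k : ℕ) :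
    1 / (κ ^ 2 + c * ((k : ℝ) + 1) ^ 2) ≤ 2 * (1 / (κ + k) - 1 / (κ + (k + 1 : ℕ))) := by
  have hk : (0 : ℝ) ≤ k := k.cast_nonneg
  have h₀ : 0 < κ + k := by positivity
  have h₁ : 0 < κ + k + 1 := by positivity
  -- `(κ + k) (κ + k + 1) ≤ (κ + k + 1)² ≤ 2 (κ² + (k + 1)²)`
  rw [Nat.cast_succ, ← add_assoc, div_sub_div _ _ h₀.ne' h₁.ne', mul_div_assoc',
    div_le_div_iff₀ (by positivity) (by positivity)]
  nlinarith [sq_nonneg (κ - k - 1), mul_le_mul_of_nonneg_right hc (sq_nonneg ((k : ℝ) + 1))]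

lemma summable_and_tsum_le_one_div_add_mul_succ_sq {κ c : ℝ} (hκ : 0 < κ) (hc : 1 ≤ c) :
    Summable (fun k : ℕ => 1 / (κ ^ 2 + c * ((k : ℝ) + 1) ^ 2)) ∧
      ∑' k : ℕ, 1 / (κ ^ 2 + c * ((k : ℝ) + 1) ^ 2) ≤ 2 / κ := by
  have hnonneg (k : ℕ) : 0 ≤ 1 / (κ ^ 2 + c * ((k : ℝ) + 1) ^ 2) := by
    have : (0 : ℝ) ≤ c := by linarith
    positivity
  have hpartial (N : ℕ) : ∑ k ∈ Finset.range N, 1 / (κ ^ 2 + c * ((k : ℝ) + 1) ^ 2) ≤ 2 / κ :=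
    calc ∑ k ∈ Finset.range N, 1 / (κ ^ 2 + c * ((k : ℝ) + 1) ^ 2)
        ≤ ∑ k ∈ Finset.range N, 2 * (1 / (κ + k) - 1 / (κ + (k + 1 : ℕ))) :=
          Finset.sum_le_sum fun k _ => one_div_add_mul_succ_sq_le hκ hc k
      _ = 2 * (1 / κ - 1 / (κ + N)) := by
          rw [← Finset.mul_sum, Finset.sum_range_sub' (fun k : ℕ => 1 / (κ + k)), Nat.cast_zero,
            add_zero]
      _ ≤ 2 / κ := by
          have : 0 ≤ 1 / (κ + N) := by positivity
          linarith [mul_one_div 2 κ]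
  exact ⟨summable_of_sum_range_le hnonneg hpartial, Real.tsum_le_of_sum_range_le hnonneg hpartial⟩

lemma summable_and_tsum_le_one_div_add_mul_sq {κ c : ℝ} (hκ : 0 < κ) (hc : 1 ≤ c) :
    Summable (fun m : ℤ => 1 / (κ ^ 2 + c * (m : ℝ) ^ 2)) ∧
      ∑' m : ℤ, 1 / (κ ^ 2 + c * (m : ℝ) ^ 2) ≤ 1 / κ ^ 2 + 4 / κ := by
  obtain ⟨hS, hle⟩ := summable_and_tsum_le_one_div_add_mul_succ_sq hκ hc
  set f : ℤ → ℝ := fun m => 1 / (κ ^ 2 + c * (m : ℝ) ^ 2)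
  have hpos : HasSum (fun k : ℕ => f (k + 1)) (∑' k : ℕ, 1 / (κ ^ 2 + c * ((k : ℝ) + 1) ^ 2)) := by
    simpa only [f, Int.cast_add, Int.cast_natCast, Int.cast_one] using hS.hasSum
  have hneg : HasSum (fun k : ℕ => f (-(k + 1))) (∑' k : ℕ, 1 / (κ ^ 2 + c * ((k : ℝ) + 1) ^ 2)) := by
    simpa only [f, Int.cast_neg, Int.cast_add, Int.cast_natCast, Int.cast_one, neg_sq]
      using hS.hasSum
  have hf := hpos.of_add_one_of_neg_add_one hneg
  refine ⟨hf.summable, hf.tsum_eq ▸ ?_⟩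
  have : f 0 = 1 / κ ^ 2 := by simp [f]
  have h4 : 4 / κ = 2 / κ + 2 / κ := by ring
  linarith

lemma add_div_four_mul_sub_sq_le_max (a : ℝ) {c : ℝ} (hc : 0 ≤ c) (x y : ℝ) :
    a + c / 4 * (x - y) ^ 2 ≤ max (a + c * x ^ 2) (a + c * y ^ 2) := by
  have h := sq_sub_le_four_mul_max_sq x y
  rcases max_cases (x ^ 2) (y ^ 2) with ⟨hmax, -⟩ | ⟨hmax, -⟩ <;> rw [hmax] at h
  · exact le_max_of_le_left (by nlinarith)
  · exact le_max_of_le_right (by nlinarith)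

theorem tsum_one_div_mul_shift_le {κ c : ℝ} (hκ : 1 ≤ κ) (hc : 1 ≤ c) (n : ℤ) :
    ∑' m : ℤ, 1 / ((κ ^ 2 + c * (m : ℝ) ^ 2) * (κ ^ 2 + c * ((n : ℝ) + m) ^ 2))
      ≤ 40 / (κ * (4 * κ ^ 2 + c * (n : ℝ) ^ 2)) := by
  have hκ₀ : 0 < κ := by linarith
  have hc₀ : 0 < c := by linarith
  obtain ⟨hS, hle⟩ := summable_and_tsum_le_one_div_add_mul_sq hκ₀ hc
  set f : ℤ → ℝ := fun m => 1 / (κ ^ 2 + c * (m : ℝ) ^ 2)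
  have hS_shift : Summable fun m => f (n + m) := (Equiv.addLeft n).summable_iff.2 hS
  have htsum_shift : ∑' m, f (n + m) = tsum f := (Equiv.addLeft n).tsum_eq f
  set D := κ ^ 2 + c / 4 * (n : ℝ) ^ 2
  have hD : 0 < D := by positivity
  have hpoint (m : ℤ) : 1 / ((κ ^ 2 + c * (m : ℝ) ^ 2) * (κ ^ 2 + c * ((n : ℝ) + m) ^ 2))
      ≤ 1 / D * (f m + f (n + m)) := by
    have hmax := add_div_four_mul_sub_sq_le_max (κ ^ 2) hc₀.le (m : ℝ) ((n : ℝ) + m)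
    rw [show (m : ℝ) - (n + m) = -n by ring, neg_sq] at hmax
    have := one_div_mul_le_of_le_max (by positivity) (by positivity) hD hmax
    simpa only [f, Int.cast_add] using this
  have hg : Summable fun m => 1 / D * (f m + f (n + m)) := (hS.add hS_shift).mul_left _
  calc _ ≤ ∑' m, 1 / D * (f m + f (n + m)) :=
        Summable.tsum_le_tsum hpoint (.of_nonneg_of_le (fun m => by positivity) hpoint hg) hg
    _ = 1 / D * (2 * tsum f) := by rw [tsum_mul_left, hS.tsum_add hS_shift, htsum_shift, two_mul]
    _ ≤ 1 / D * (10 / κ) := by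
        have hsq : 1 / κ ^ 2 ≤ 1 / κ := one_div_le_one_div_of_le hκ₀ (by nlinarith)
        have : 10 / κ = 2 * (1 / κ + 4 / κ) := by ring
        gcongr; linarith
    _ = 40 / (κ * (4 * κ ^ 2 + c * (n : ℝ) ^ 2)) := by field_simp; ring

/-- There exists a constant `C > 0` such that for every real `κ ≥ 1` and
every integer `n`,
`∑_{m∈ℤ} 1/((κ² + 4π²m²)(κ² + 4π²(n+m)²)) ≤ C / (κ (4κ² + 4π²n²))`. -/
theorem stmt_0 :
    ∃ C : ℝ, 0 < C ∧ ∀ κ : ℝ, 1 ≤ κ → ∀ n : ℤ,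
      (∑' m : ℤ, 1 / ((κ ^ 2 + 4 * π ^ 2 * (m : ℝ) ^ 2) *
          (κ ^ 2 + 4 * π ^ 2 * ((n : ℝ) + (m : ℝ)) ^ 2)))
        ≤ C / (κ * (4 * κ ^ 2 + 4 * π ^ 2 * (n : ℝ) ^ 2)) :=
  ⟨40, by norm_num, fun _ hκ n =>
    tsum_one_div_mul_shift_le hκ (by nlinarith [pi_gt_three]) n⟩
end

section
/- For every α with 0 < α < 1/4 there exists a constant C = C(α) > 0 such that for every real κ ≥ 1 and every integer n, ∑_{m∈ℤ} [(κ² + 4π²m²)(κ² + 4π²(n+m)²)]^{-(1/2 - α)} ≤ C κ^{-1+4α}. -/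
open Real

/-!
By AM–GM, `(a_m a_{n+m})^{-s} ≤ (a_m^{-2s} + a_{n+m}^{-2s}) / 2`, and the shift `m ↦ n + m`
does not change the sum of the second term, so the sum is at most `∑ a_m^{-2s}`, where
`a_m = κ² + 4π²m² ≥ (κ + |m|)² / 2`. This leaves `∑_{m ∈ ℤ} (κ + |m|)^{-q}` with `q = 2 - 4α > 1`,
which comparison with `∫_κ^∞ x^{-q} dx = κ^{1-q} / (q - 1)` bounds by a multiple of
`κ^{1-q} = κ^{-1+4α}`.
-/

theorem Real.mul_rpow_le_add_rpow_two_mul_div_two {a b : ℝ} (ha : 0 ≤ a) (hb : 0 ≤ b) (t : ℝ) :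
    (a * b) ^ t ≤ (a ^ (2 * t) + b ^ (2 * t)) / 2 := by
  have hsq : ∀ {x : ℝ}, 0 ≤ x → x ^ (2 * t) = (x ^ t) ^ 2 := fun hx => by
    rw [mul_comm, rpow_mul hx, rpow_two]
  rw [mul_rpow ha hb, hsq ha, hsq hb]
  linarith [two_mul_le_add_sq (a ^ t) (b ^ t)]

theorem tsum_rpow_mul_add_left_le {a : ℤ → ℝ} (ha : ∀ m, 0 ≤ a m) {t : ℝ}
    (hsum : Summable fun m => a m ^ (2 * t)) (n : ℤ) :
    ∑' m, (a m * a (n + m)) ^ t ≤ ∑' m, a m ^ (2 * t) := by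
  have hshift : Summable fun m => a (n + m) ^ (2 * t) :=
    (Equiv.addLeft n).summable_iff.mpr hsum
  have hamgm : ∀ m, (a m * a (n + m)) ^ t ≤ (a m ^ (2 * t) + a (n + m) ^ (2 * t)) / 2 :=
    fun m => mul_rpow_le_add_rpow_two_mul_div_two (ha m) (ha (n + m)) t
  have havg : Summable fun m => (a m ^ (2 * t) + a (n + m) ^ (2 * t)) / 2 :=
    (hsum.add hshift).div_const 2
  calc ∑' m, (a m * a (n + m)) ^ t
      ≤ ∑' m, (a m ^ (2 * t) + a (n + m) ^ (2 * t)) / 2 :=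
        (havg.of_nonneg_of_le (fun m => by have := ha m; have := ha (n + m); positivity)
          hamgm).tsum_le_tsum hamgm havg
    _ = ∑' m, a m ^ (2 * t) := by
        have hinv : ∑' m, a (n + m) ^ (2 * t) = ∑' m, a m ^ (2 * t) :=
          (Equiv.addLeft n).tsum_eq (a · ^ (2 * t))
        rw [tsum_div_const, hsum.tsum_add hshift, hinv]
        ring

theorem summable_and_tsum_add_nat_succ_rpow_neg_le {κ q : ℝ} (hκ : 0 < κ) (hq : 1 < q) :
    Summable (fun k : ℕ => (κ + (k + 1)) ^ (-q)) ∧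
      ∑' k : ℕ, (κ + (k + 1)) ^ (-q) ≤ κ ^ (1 - q) / (q - 1) := by
  have hnonneg : ∀ k : ℕ, 0 ≤ (κ + (k + 1)) ^ (-q) := fun k => by positivity
  have hpartial (N : ℕ) :
      ∑ k ∈ Finset.range N, (κ + (k + 1)) ^ (-q) ≤ κ ^ (1 - q) / (q - 1) := by
    have hanti : AntitoneOn (fun x : ℝ => x ^ (-q)) (Set.Icc κ (κ + N)) :=
      (antitoneOn_rpow_Ioi_of_exponent_nonpos (by linarith)).mono
        fun x hx => lt_of_lt_of_le hκ hx.1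
    have hzero : (0 : ℝ) ∉ Set.uIcc κ (κ + N) := by
      rw [Set.uIcc_of_le (le_add_of_nonneg_right N.cast_nonneg)]
      exact fun h => hκ.not_ge h.1
    calc ∑ k ∈ Finset.range N, (κ + (k + 1)) ^ (-q)
        ≤ ∫ x in κ..κ + N, x ^ (-q) := by
          simpa only [Nat.cast_add, Nat.cast_one] using hanti.sum_le_integral
      _ = (κ ^ (1 - q) - (κ + N) ^ (1 - q)) / (q - 1) := by
          rw [integral_rpow (Or.inr ⟨by linarith, hzero⟩)]
          rw [show -q + 1 = 1 - q by ring, ← neg_sub q 1, div_neg, ← neg_div, neg_sub]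
      _ ≤ κ ^ (1 - q) / (q - 1) := by
          gcongr
          exact sub_le_self _ (by positivity)
  exact ⟨summable_of_sum_range_le hnonneg hpartial, Real.tsum_le_of_sum_range_le hnonneg hpartial⟩

theorem summable_and_tsum_add_abs_int_rpow_neg_le {κ q : ℝ} (hκ : 1 ≤ κ) (hq : 1 < q) :
    Summable (fun m : ℤ => (κ + |(m : ℝ)|) ^ (-q)) ∧
      ∑' m : ℤ, (κ + |(m : ℝ)|) ^ (-q) ≤ (1 + 2 / (q - 1)) * κ ^ (1 - q) := by
  obtain ⟨hsum, hle⟩ := summable_and_tsum_add_nat_succ_rpow_neg_le (κ := κ) (by linarith) hq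
  set f : ℤ → ℝ := fun m => (κ + |(m : ℝ)|) ^ (-q)
  have hpos : (fun k : ℕ => f (k + 1)) = fun k : ℕ => (κ + (k + 1)) ^ (-q) := by
    ext k; simp only [f]; push_cast; rw [abs_of_nonneg (by positivity)]
  have hneg : (fun k : ℕ => f (-(k + 1))) = fun k : ℕ => (κ + (k + 1)) ^ (-q) := by
    ext k; simp only [f]; push_cast; rw [abs_neg, abs_of_nonneg (by positivity)]
  have hhas : HasSum f (_ + f 0 + _) :=
    HasSum.of_add_one_of_neg_add_one (hpos ▸ hsum.hasSum) (hneg ▸ hsum.hasSum)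
  refine ⟨hhas.summable, ?_⟩
  have hκq : κ ^ (-q) ≤ κ ^ (1 - q) := rpow_le_rpow_of_exponent_le hκ (by linarith)
  have hf0 : f 0 = κ ^ (-q) := by simp [f]
  have hq1 : 0 < q - 1 := by linarith
  calc ∑' m, f m ≤ κ ^ (1 - q) / (q - 1) + κ ^ (1 - q) + κ ^ (1 - q) / (q - 1) := by
        rw [hhas.tsum_eq, hf0, hpos, hneg]; gcongr
    _ = (1 + 2 / (q - 1)) * κ ^ (1 - q) := by ring

theorem sq_add_four_pi_sq_mul_sq_rpow_le {κ : ℝ} (hκ : 0 < κ) (x : ℝ) {p : ℝ} (hp : p ≤ 0) :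
    (κ ^ 2 + 4 * π ^ 2 * x ^ 2) ^ p ≤ 2 ^ (-p) * (κ + |x|) ^ (2 * p) := by
  have hbase : (κ + |x|) ^ 2 / 2 ≤ κ ^ 2 + 4 * π ^ 2 * x ^ 2 := by
    have hsq : (κ + |x|) ^ 2 / 2 ≤ κ ^ 2 + x ^ 2 := by nlinarith [sq_nonneg (κ - |x|), sq_abs x]
    have hpi : x ^ 2 ≤ 4 * π ^ 2 * x ^ 2 :=
      le_mul_of_one_le_left (sq_nonneg x) (by nlinarith [pi_gt_three])
    linarith
  calc (κ ^ 2 + 4 * π ^ 2 * x ^ 2) ^ p ≤ ((κ + |x|) ^ 2 / 2) ^ p :=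
        rpow_le_rpow_of_nonpos (by positivity) hbase hp
    _ = 2 ^ (-p) * (κ + |x|) ^ (2 * p) := by
        rw [div_rpow (by positivity) zero_le_two, rpow_neg zero_le_two,
          rpow_mul (by positivity) 2 p, rpow_two]
        ring

theorem stmt_2_general (α : ℝ) (hα : α < 1 / 4) :
    ∃ C : ℝ, 0 < C ∧ ∀ κ : ℝ, 1 ≤ κ → ∀ n : ℤ,
      (∑' m : ℤ, ((κ ^ 2 + 4 * π ^ 2 * (m : ℝ) ^ 2) *
          (κ ^ 2 + 4 * π ^ 2 * ((n : ℝ) + (m : ℝ)) ^ 2)) ^ (-(1 / 2 - α)))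
        ≤ C * κ ^ (-1 + 4 * α) := by
  have hα' : 0 < 1 - 4 * α := by linarith
  refine ⟨2 ^ (1 - 2 * α) * (1 + 2 / (1 - 4 * α)), by positivity, fun κ hκ n => ?_⟩
  set a : ℤ → ℝ := fun m => κ ^ 2 + 4 * π ^ 2 * (m : ℝ) ^ 2
  have hp : 2 * -(1 / 2 - α) = -(1 - 2 * α) := by ring
  have hq : 2 * -(1 - 2 * α) = -(2 - 4 * α) := by ring
  obtain ⟨hsum, hle⟩ := summable_and_tsum_add_abs_int_rpow_neg_le (q := 2 - 4 * α) hκ (by linarith)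
  have hbound : ∀ m, a m ^ (-(1 - 2 * α)) ≤ 2 ^ (1 - 2 * α) * (κ + |(m : ℝ)|) ^ (-(2 - 4 * α)) :=
    fun m => by
      simpa only [neg_neg, hq] using
        sq_add_four_pi_sq_mul_sq_rpow_le (by linarith) (m : ℝ) (p := -(1 - 2 * α)) (by linarith)
  have hasum : Summable fun m => a m ^ (-(1 - 2 * α)) :=
    (hsum.mul_left _).of_nonneg_of_le (fun m => by positivity) hbound
  calc ∑' m : ℤ, ((κ ^ 2 + 4 * π ^ 2 * (m : ℝ) ^ 2) *
          (κ ^ 2 + 4 * π ^ 2 * ((n : ℝ) + (m : ℝ)) ^ 2)) ^ (-(1 / 2 - α))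
      = ∑' m, (a m * a (n + m)) ^ (-(1 / 2 - α)) := by simp only [a]; push_cast; rfl
    _ ≤ ∑' m, a m ^ (2 * -(1 / 2 - α)) :=
        tsum_rpow_mul_add_left_le (fun m => by positivity) (by rwa [hp]) n
    _ = ∑' m, a m ^ (-(1 - 2 * α)) := by rw [hp]
    _ ≤ ∑' m : ℤ, 2 ^ (1 - 2 * α) * (κ + |(m : ℝ)|) ^ (-(2 - 4 * α)) :=
        hasum.tsum_le_tsum hbound (hsum.mul_left _)
    _ ≤ 2 ^ (1 - 2 * α) * ((1 + 2 / (2 - 4 * α - 1)) * κ ^ (1 - (2 - 4 * α))) := by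
        rw [tsum_mul_left]; gcongr
    _ = 2 ^ (1 - 2 * α) * (1 + 2 / (1 - 4 * α)) * κ ^ (-1 + 4 * α) := by ring_nf

/-- For every `α` with `0 < α < 1/4` there exists `C = C(α) > 0` such that
for every real `κ ≥ 1` and every integer `n`,
`∑_{m∈ℤ} [(κ² + 4π²m²)(κ² + 4π²(n+m)²)]^{-(1/2-α)} ≤ C κ^{-1+4α}`. -/
theorem stmt_2 (α : ℝ) (hα0 : 0 < α) (hα : α < 1 / 4) :
    ∃ C : ℝ, 0 < C ∧ ∀ κ : ℝ, 1 ≤ κ → ∀ n : ℤ,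
      (∑' m : ℤ, ((κ ^ 2 + 4 * π ^ 2 * (m : ℝ) ^ 2) *
          (κ ^ 2 + 4 * π ^ 2 * ((n : ℝ) + (m : ℝ)) ^ 2)) ^ (-(1 / 2 - α)))
        ≤ C * κ ^ (-1 + 4 * α) :=
  stmt_2_general α hα
end

section
/- For every α with 0 < α < 1/4 there exists a constant C = C(α) > 0 such that for every real κ ≥ 1 and every ξ ∈ ℝ, ∫_ℝ [(κ² + η²)(κ² + (ξ+η)²)]^{-(1/2 - α)} dη ≤ C κ^{-1+4α}. -/
/-!
By AM–GM, `(ab)^{-p/2} ≤ (a^{-p} + b^{-p})/2`, so the integrand is dominated by the average of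
`(κ² + η²)^{-p}` and its translate by `ξ`, with `p = 1 - 2α`. Both have the same integral, and the
substitution `η = κ t` gives `∫ (κ² + η²)^{-p} dη = κ^{1-2p} ∫ (1 + t²)^{-p} dt`, where the last
integral is finite exactly because `2p > 1`, i.e. `α < 1/4`.
-/

open Real MeasureTheory

lemma mul_rpow_half_le_add_div_two {a b : ℝ} (ha : 0 ≤ a) (hb : 0 ≤ b) (s : ℝ) :
    (a * b) ^ (s / 2) ≤ (a ^ s + b ^ s) / 2 := by
  have hsq : ∀ {c : ℝ}, 0 ≤ c → (c ^ (s / 2)) ^ 2 = c ^ s := fun hc => by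
    rw [← rpow_natCast, ← rpow_mul hc]; norm_num
  rw [mul_rpow ha hb, ← hsq ha, ← hsq hb]
  nlinarith [sq_nonneg (a ^ (s / 2) - b ^ (s / 2))]

lemma integral_rpow_half_mul_comp_add_le {a : ℝ → ℝ} (ha : ∀ η, 0 ≤ a η) {s : ℝ}
    (hint : Integrable fun η => a η ^ s) (ξ : ℝ) :
    ∫ η, (a η * a (ξ + η)) ^ (s / 2) ≤ ∫ η, a η ^ s := by
  have hshift : Integrable fun η => a (ξ + η) ^ s := hint.comp_add_left ξ
  calc ∫ η, (a η * a (ξ + η)) ^ (s / 2)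
      ≤ ∫ η, (a η ^ s + a (ξ + η) ^ s) / 2 :=
        integral_mono_of_nonneg (.of_forall fun η => rpow_nonneg (mul_nonneg (ha η) (ha _)) _)
          ((hint.add hshift).div_const 2)
          (.of_forall fun η => mul_rpow_half_le_add_div_two (ha η) (ha _) s)
    _ = ∫ η, a η ^ s := by
        rw [integral_div, integral_add hint hshift,
          integral_add_left_eq_self (fun η => a η ^ s) ξ]
        ring

lemma integrable_one_add_sq_rpow_neg {p : ℝ} (hp : 1 / 2 < p) :
    Integrable fun t : ℝ => (1 + t ^ 2) ^ (-p) := by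
  have h := integrable_rpow_neg_one_add_norm_sq (E := ℝ) (μ := volume) (r := 2 * p)
    (by norm_num; linarith)
  refine h.congr (.of_forall fun t => ?_)
  simp only [norm_eq_abs, sq_abs, neg_mul_eq_neg_mul]
  ring_nf

lemma integral_one_add_sq_rpow_neg_pos {p : ℝ} (hp : 1 / 2 < p) :
    0 < ∫ t : ℝ, (1 + t ^ 2) ^ (-p) := by
  rw [integral_pos_iff_support_of_nonneg (fun t => rpow_nonneg (by positivity) _)
    (integrable_one_add_sq_rpow_neg hp)]
  have hsupp : Function.support (fun t : ℝ => (1 + t ^ 2) ^ (-p)) = Set.univ :=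
    Function.support_eq_univ fun t => (rpow_pos_of_pos (by positivity) _).ne'
  simp [hsupp]

lemma sq_add_sq_rpow_eq {κ : ℝ} (hκ : 0 < κ) (η s : ℝ) :
    (κ ^ 2 + η ^ 2) ^ s = κ ^ (2 * s) * (1 + (κ⁻¹ * η) ^ 2) ^ s := by
  have hsplit : κ ^ 2 + η ^ 2 = κ ^ 2 * (1 + (κ⁻¹ * η) ^ 2) := by field_simp
  rw [hsplit, mul_rpow (by positivity) (by positivity), ← rpow_natCast, ← rpow_mul hκ.le]
  norm_num

lemma integral_sq_add_sq_rpow {κ : ℝ} (hκ : 0 < κ) (s : ℝ) :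
    ∫ η : ℝ, (κ ^ 2 + η ^ 2) ^ s = κ ^ (2 * s + 1) * ∫ t : ℝ, (1 + t ^ 2) ^ s := by
  simp_rw [sq_add_sq_rpow_eq hκ _ s]
  rw [integral_const_mul, Measure.integral_comp_inv_mul_left (fun t => (1 + t ^ 2) ^ s),
    abs_of_pos hκ, smul_eq_mul, ← mul_assoc, rpow_add hκ, rpow_one]

lemma integrable_sq_add_sq_rpow_neg {κ : ℝ} (hκ : 0 < κ) {p : ℝ} (hp : 1 / 2 < p) :
    Integrable fun η : ℝ => (κ ^ 2 + η ^ 2) ^ (-p) := by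
  simp_rw [sq_add_sq_rpow_eq hκ _ (-p)]
  exact ((integrable_one_add_sq_rpow_neg hp).comp_mul_left' (inv_ne_zero hκ.ne')).const_mul _

theorem stmt_3_general (α : ℝ) (hα : α < 1 / 4) :
    ∃ C : ℝ, 0 < C ∧ ∀ κ : ℝ, 1 ≤ κ → ∀ ξ : ℝ,
      (∫ η : ℝ, ((κ ^ 2 + η ^ 2) * (κ ^ 2 + (ξ + η) ^ 2)) ^ (-(1 / 2 - α)))
        ≤ C * κ ^ (-1 + 4 * α) := by
  have hp : 1 / 2 < 1 - 2 * α := by linarith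
  refine ⟨∫ t : ℝ, (1 + t ^ 2) ^ (-(1 - 2 * α)), integral_one_add_sq_rpow_neg_pos hp,
    fun κ hκ ξ => ?_⟩
  have hκ0 : 0 < κ := zero_lt_one.trans_le hκ
  rw [show -(1 / 2 - α) = -(1 - 2 * α) / 2 by ring]
  calc ∫ η : ℝ, ((κ ^ 2 + η ^ 2) * (κ ^ 2 + (ξ + η) ^ 2)) ^ (-(1 - 2 * α) / 2)
      ≤ ∫ η : ℝ, (κ ^ 2 + η ^ 2) ^ (-(1 - 2 * α)) :=
        integral_rpow_half_mul_comp_add_le (a := fun η => κ ^ 2 + η ^ 2) (fun η => by positivity)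
          (integrable_sq_add_sq_rpow_neg hκ0 hp) ξ
    _ = (∫ t : ℝ, (1 + t ^ 2) ^ (-(1 - 2 * α))) * κ ^ (-1 + 4 * α) := by
        rw [integral_sq_add_sq_rpow hκ0, mul_comm]
        ring_nf

/-- For every `α` with `0 < α < 1/4` there exists `C = C(α) > 0` such that
for every real `κ ≥ 1` and every `ξ ∈ ℝ`,
`∫_ℝ [(κ² + η²)(κ² + (ξ+η)²)]^{-(1/2-α)} dη ≤ C κ^{-1+4α}`. -/
theorem stmt_3 (α : ℝ) (hα0 : 0 < α) (hα : α < 1 / 4) :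
    ∃ C : ℝ, 0 < C ∧ ∀ κ : ℝ, 1 ≤ κ → ∀ ξ : ℝ,
      (∫ η : ℝ, ((κ ^ 2 + η ^ 2) * (κ ^ 2 + (ξ + η) ^ 2)) ^ (-(1 / 2 - α)))
        ≤ C * κ ^ (-1 + 4 * α) :=
  stmt_3_general α hα
end

section
/- Let κ > 0 and let ξ₁, ξ₂ ∈ 2πℤ with ξ₁ + ξ₂ ≠ 0. Then ∑_{ξ∈2πℤ} 1/((κ + iξ)(κ + i(ξ + ξ₁ + ξ₂))(κ - i(ξ + ξ₂))) = ((1 + e^{-κ}) / (1 - e^{-κ})) · 1/((2κ + iξ₁)(2κ - iξ₂)). -/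
/-!
With `A m = κ + 2πi m`, the summand is `1 / (P Q R)` for `P = A (n)`, `Q = A (n + a + b)`,
`R = A (-(n + b))`, where `Q - P`, `P + R` and `Q + R` do not depend on `n`. Partial fractions
therefore write it as a combination of two sums of the form `∑ₙ (A (n + c)⁻¹ + A (-n)⁻¹)`.
Such a sum does not depend on the shift `c`, since the difference telescopes, and for `c = 0`
the Mittag-Leffler expansion of the cotangent evaluates it as `cot (π y) / i` at `y = κ / 2πi`,
that is, `coth (κ / 2) = (1 + e^{-κ}) / (1 - e^{-κ})`.
-/

open Real Complex Filter Topology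

section Telescoping

variable {E : Type*} [AddCommGroup E] [TopologicalSpace E] [IsTopologicalAddGroup E] [T2Space E]
  {g : ℤ → E}

open Finset in
theorem hasSum_comp_add_one_sub_of_tendsto_cofinite (hg : Tendsto g cofinite (𝓝 0))
    (hs : Summable fun n ↦ g (n + 1) - g n) : HasSum (fun n ↦ g (n + 1) - g n) 0 := by
  obtain ⟨a, ha⟩ := hs
  have hpartial (N : ℕ) : ∑ i ∈ range N, ((g (i + 1) - g i) + (g (-(i + 1) + 1) - g (-(i + 1))))
      = g N - g (-N) := by
    induction N with
    | zero => simp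
    | succ N ih =>
      rw [sum_range_succ, ih, show -((N : ℤ) + 1) + 1 = -N by ring]
      push_cast
      abel
  have hsymm := ha.nat_add_neg_add_one.tendsto_sum_nat
  simp only [hpartial] at hsymm
  have hlim : Tendsto (fun N : ℕ ↦ g N - g (-N)) atTop (𝓝 0) := by
    rw [Int.cofinite_eq, tendsto_sup] at hg
    simpa using (hg.2.comp tendsto_natCast_atTop_atTop).sub
      (hg.1.comp (tendsto_neg_atTop_atBot.comp tendsto_natCast_atTop_atTop))
  rwa [tendsto_nhds_unique hsymm hlim] at ha

theorem hasSum_comp_add_sub_of_tendsto_cofinite (hg : Tendsto g cofinite (𝓝 0))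
    (hs : Summable fun n ↦ g (n + 1) - g n) (c : ℤ) : HasSum (fun n ↦ g (n + c) - g n) 0 := by
  have hone := hasSum_comp_add_one_sub_of_tendsto_cofinite hg hs
  induction c using Int.induction_on with
  | zero => simp [hasSum_zero]
  | succ c ih =>
    have := ((Equiv.addRight 1).hasSum_iff.mpr ih).add hone
    simpa [add_assoc, add_comm (1 : ℤ)] using this
  | pred c ih =>
    have := ((Equiv.subRight 1).hasSum_iff.mpr ih).sub ((Equiv.subRight 1).hasSum_iff.mpr hone)
    rw [sub_zero] at this
    refine this.congr_fun fun n ↦ ?_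
    simp only [Function.comp_apply, Equiv.subRight_apply, sub_add_cancel, sub_sub_sub_cancel_right]
    rw [show n + (-c - 1) = n - 1 + -c by ring]

end Telescoping

section MittagLeffler

variable {y : ℂ}

theorem hasSum_inv_add_add_inv_sub (hy : y ∈ integerComplement) :
    HasSum (fun n : ℤ ↦ (y + n)⁻¹ + (y - n)⁻¹) (2 * π * cot (π * y)) := by
  have hsum : Summable fun n : ℤ ↦ (y + n)⁻¹ + (y - n)⁻¹ := by
    refine ((EisensteinSeries.summable_linear_sub_mul_linear_add y 1 1).mul_left (2 * y)).congr
      fun n ↦ ?_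
    have h₁ := integerComplement_add_ne_zero hy n
    have h₂ : y - n ≠ 0 := by simpa [sub_eq_add_neg] using integerComplement_add_ne_zero hy (-n)
    push_cast
    field_simp
    ring
  have heven : Function.Even fun n : ℤ ↦ (y + n)⁻¹ + (y - n)⁻¹ := fun n ↦ by
    push_cast
    ring
  convert hsum.hasSum using 1
  rw [tsum_int_eq_zero_add_two_mul_tsum_pnat heven hsum, mul_assoc, cot_series_rep hy]
  simp only [one_div, Int.cast_zero, add_zero, sub_zero, Int.cast_natCast, nsmul_eq_mul]
  rw [tsum_congr fun n : ℕ+ ↦ add_comm (y - n)⁻¹ (y + n)⁻¹]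
  push_cast
  ring

theorem tendsto_inv_add_intCast_cofinite (y : ℂ) :
    Tendsto (fun n : ℤ ↦ (y + n)⁻¹) cofinite (𝓝 0) := by
  refine (EisensteinSeries.linear_inv_isBigO_right 1 y).trans_tendsto ?_ |>.congr fun n ↦ by simp
  refine tendsto_inv₀_cobounded.comp ?_
  rw [Metric.cobounded_eq_cocompact]
  exact Int.tendsto_coe_cofinite

theorem summable_inv_add_intCast_add_one_sub (hy : y ∈ integerComplement) :
    Summable fun n : ℤ ↦ (y + ((n + 1 : ℤ) : ℂ))⁻¹ - (y + n)⁻¹ := by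
  refine (EisensteinSeries.summable_linear_right_add_one_mul_linear_right y 1 1).neg.congr
    fun n ↦ ?_
  have h₁ := integerComplement_add_ne_zero hy n
  have h₂ := integerComplement_add_ne_zero hy (n + 1)
  rw [Int.cast_add, Int.cast_one, ← add_assoc] at h₂ ⊢
  field_simp
  ring

theorem hasSum_inv_add_intCast_add_inv_sub (hy : y ∈ integerComplement) (c : ℤ) :
    HasSum (fun n : ℤ ↦ (y + ((n + c : ℤ) : ℂ))⁻¹ + (y - n)⁻¹) (2 * π * cot (π * y)) := by
  have hshift := hasSum_comp_add_sub_of_tendsto_cofinite (g := fun n : ℤ ↦ (y + n)⁻¹)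
    (tendsto_inv_add_intCast_cofinite y) (summable_inv_add_intCast_add_one_sub hy) c
  simpa using (hshift.add (hasSum_inv_add_add_inv_sub hy)).congr_fun fun n ↦ by push_cast; ring

end MittagLeffler

section CircleSymbol

variable {κ : ℝ}

/-- The Fourier multiplier of `κ + ∂` on `ℝ/ℤ` at the frequency `2πm`. -/
noncomputable def circleSymbol (κ : ℝ) (m : ℤ) : ℂ := κ + I * (2 * π * m)

lemma circleSymbol_eq_mul (κ : ℝ) (m : ℤ) :
    circleSymbol κ m = 2 * π * I * (κ / (2 * π * I) + m) := by
  have : (2 * π * I : ℂ) ≠ 0 := by simp [pi_ne_zero]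
  rw [circleSymbol]
  field_simp

lemma circleSymbol_ne_zero (hκ : κ ≠ 0) (m : ℤ) : circleSymbol κ m ≠ 0 := fun h ↦
  hκ (by simpa [circleSymbol] using congrArg re h)

lemma div_two_pi_I_mem_integerComplement (hκ : κ ≠ 0) :
    (κ : ℂ) / (2 * π * I) ∈ integerComplement := by
  rintro ⟨n, hn⟩
  have := congrArg im hn
  simp [div_eq_mul_inv, pi_ne_zero] at this
  exact hκ this

lemma inv_two_pi_I_mul_cot (hκ : κ ≠ 0) :
    (2 * π * I)⁻¹ * (2 * π * cot (π * (κ / (2 * π * I))))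
      = (((1 + Real.exp (-κ)) / (1 - Real.exp (-κ)) : ℝ) : ℂ) := by
  have hexp : Complex.exp κ ≠ 1 := by
    rw [← ofReal_exp, ne_eq, ofReal_eq_one, Real.exp_eq_one_iff]
    exact hκ
  rw [cot_pi_eq_exp_ratio, mul_div_cancel₀ _ (by simp [pi_ne_zero])]
  push_cast
  rw [Complex.exp_neg]
  have h₁ : Complex.exp κ - 1 ≠ 0 := sub_ne_zero.mpr hexp
  have h₂ : 1 - Complex.exp κ ≠ 0 := sub_ne_zero.mpr hexp.symm
  field_simp
  rw [I_sq]
  ring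

theorem hasSum_inv_circleSymbol_add_inv_circleSymbol_neg (hκ : κ ≠ 0) (c : ℤ) :
    HasSum (fun n : ℤ ↦ (circleSymbol κ (n + c))⁻¹ + (circleSymbol κ (-n))⁻¹)
      (((1 + Real.exp (-κ)) / (1 - Real.exp (-κ)) : ℝ) : ℂ) := by
  rw [← inv_two_pi_I_mul_cot hκ]
  refine ((hasSum_inv_add_intCast_add_inv_sub (div_two_pi_I_mem_integerComplement hκ) c).mul_left
    (2 * π * I)⁻¹).congr_fun fun n ↦ ?_
  simp only [circleSymbol_eq_mul, mul_inv, Int.cast_neg, ← sub_eq_add_neg]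
  ring

end CircleSymbol

theorem one_div_mul_mul_eq_sub {K : Type*} [Field K] {P Q R : K} (hP : P ≠ 0) (hQ : Q ≠ 0)
    (hR : R ≠ 0) (hPQ : Q - P ≠ 0) (hPR : P + R ≠ 0) (hQR : Q + R ≠ 0) :
    1 / (P * Q * R)
      = ((Q - P) * (P + R))⁻¹ * (P⁻¹ + R⁻¹) - ((Q - P) * (Q + R))⁻¹ * (Q⁻¹ + R⁻¹) := by
  field_simp
  ring

theorem hasSum_one_div_circleSymbol_mul_mul {κ : ℝ} (hκ : κ ≠ 0) {a b : ℤ} (hab : a + b ≠ 0) :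
    HasSum (fun m : ℤ ↦ 1 / (circleSymbol κ (m - b) * circleSymbol κ (m + a) * circleSymbol κ (-m)))
      ((((1 + Real.exp (-κ)) / (1 - Real.exp (-κ)) : ℝ) : ℂ) *
        (1 / ((2 * κ + I * (2 * π * a)) * (2 * κ - I * (2 * π * b))))) := by
  set S : ℂ := (((1 + Real.exp (-κ)) / (1 - Real.exp (-κ)) : ℝ) : ℂ)
  set t : ℂ := I * (2 * π * (a + b))
  set d : ℂ := 2 * κ - I * (2 * π * b)
  set e : ℂ := 2 * κ + I * (2 * π * a)
  have ht : t ≠ 0 := mul_ne_zero I_ne_zero (by simpa [pi_ne_zero] using mod_cast hab)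
  have hd : d ≠ 0 := fun h ↦ hκ (by simpa [d] using congrArg re h)
  have he : e ≠ 0 := fun h ↦ hκ (by simpa [e] using congrArg re h)
  have hterm (m : ℤ) :
      1 / (circleSymbol κ (m - b) * circleSymbol κ (m + a) * circleSymbol κ (-m))
        = (t * d)⁻¹ * ((circleSymbol κ (m - b))⁻¹ + (circleSymbol κ (-m))⁻¹)
          - (t * e)⁻¹ * ((circleSymbol κ (m + a))⁻¹ + (circleSymbol κ (-m))⁻¹) := by
    have hQP : circleSymbol κ (m + a) - circleSymbol κ (m - b) = t := by
      simp only [circleSymbol, t]; push_cast; ring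
    have hPR : circleSymbol κ (m - b) + circleSymbol κ (-m) = d := by
      simp only [circleSymbol, d]; push_cast; ring
    have hQR : circleSymbol κ (m + a) + circleSymbol κ (-m) = e := by
      simp only [circleSymbol, e]; push_cast; ring
    rw [one_div_mul_mul_eq_sub (circleSymbol_ne_zero hκ _) (circleSymbol_ne_zero hκ _)
      (circleSymbol_ne_zero hκ _) (hQP ▸ ht) (hPR ▸ hd) (hQR ▸ he), hQP, hPR, hQR]
  have hsum := ((hasSum_inv_circleSymbol_add_inv_circleSymbol_neg hκ (-b)).mul_left
    (t * d)⁻¹).sub ((hasSum_inv_circleSymbol_add_inv_circleSymbol_neg hκ a).mul_left (t * e)⁻¹)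
  simp only [← sub_eq_add_neg] at hsum
  have hvalue : S * (1 / (e * d)) = (t * d)⁻¹ * S - (t * e)⁻¹ * S := by
    field_simp
    ring
  exact hvalue ▸ hsum.congr_fun hterm

/-- Let `κ > 0` and `ξ₁, ξ₂ ∈ 2πℤ` with `ξ₁ + ξ₂ ≠ 0`. Then
`∑_{ξ∈2πℤ} 1/((κ + iξ)(κ + i(ξ+ξ₁+ξ₂))(κ - i(ξ+ξ₂)))
  = ((1 + e^{-κ})/(1 - e^{-κ})) ⬝ 1/((2κ + iξ₁)(2κ - iξ₂))`. -/
theorem stmt_5 (κ : ℝ) (hκ : 0 < κ) (ξ₁ ξ₂ : ℝ)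
    (h₁ : ∃ a : ℤ, ξ₁ = 2 * π * a) (h₂ : ∃ b : ℤ, ξ₂ = 2 * π * b)
    (hne : ξ₁ + ξ₂ ≠ 0) :
    (∑' n : ℤ, 1 / (((κ : ℂ) + Complex.I * (2 * π * n)) *
        ((κ : ℂ) + Complex.I * (2 * π * n + ξ₁ + ξ₂)) *
        ((κ : ℂ) - Complex.I * (2 * π * n + ξ₂))))
      = (((1 + Real.exp (-κ)) / (1 - Real.exp (-κ)) : ℝ) : ℂ) *
          (1 / ((2 * (κ : ℂ) + Complex.I * ξ₁) * (2 * (κ : ℂ) - Complex.I * ξ₂))) := by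
  obtain ⟨a, rfl⟩ := h₁
  obtain ⟨b, rfl⟩ := h₂
  have hab : a + b ≠ 0 := fun h ↦ hne (by rw [← mul_add, ← Int.cast_add, h]; simp)
  rw [← (Equiv.subRight b).tsum_eq]
  convert (hasSum_one_div_circleSymbol_mul_mul hκ.ne' hab).tsum_eq using 1
  · refine tsum_congr fun m ↦ ?_
    simp only [Equiv.subRight_apply, circleSymbol]
    congr 1
    push_cast
    ring
  · push_cast
    rfl
end

section
/- Let -1 < s < 1. There exists a constant C = C(s) > 0 such that for every real κ ≥ 1 and every ξ ∈ ℝ, ∑_{k=1}^∞ (κ 2^k)^{2s} w(ξ; κ 2^k) ≤ C (1 + ξ²)^s. -/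
open Real

/-- The multiplier `w(ξ; m) = 3m²ξ² / (4(ξ² + m²)(ξ² + 4m²))`. -/
noncomputable def w (ξ m : ℝ) : ℝ :=
  3 * m ^ 2 * ξ ^ 2 / (4 * (ξ ^ 2 + m ^ 2) * (ξ ^ 2 + 4 * m ^ 2))

/-!
For `m ≥ 1` and `R = 1 + ξ²` one has `w(ξ; m) ≤ ¾ min(R/m², m²/R)`, so the `k`-th term is at most
`¾ R^s min(y^(s-1), y^(s+1))` with `y = m²/R = y₀ 4^k`. Since `s - 1 < 0 < s + 1`, these numbers
decay geometrically on both sides of the index at which `y₀ 4^k` crosses `1`, and both geometric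
series are bounded by constants depending only on `s`.
-/

open Finset

lemma w_nonneg (ξ m : ℝ) : 0 ≤ w ξ m := by
  unfold w; positivity

lemma w_eq_mul (ξ : ℝ) {m : ℝ} (hm : m ≠ 0) :
    w ξ m = 3 / 4 * (m ^ 2 / (ξ ^ 2 + m ^ 2)) * (ξ ^ 2 / (ξ ^ 2 + 4 * m ^ 2)) := by
  have : 0 < m ^ 2 := by positivity
  unfold w
  field_simp

lemma w_le_min (ξ : ℝ) {m : ℝ} (hm : 1 ≤ m) :
    w ξ m ≤ 3 / 4 * min ((1 + ξ ^ 2) / m ^ 2) (m ^ 2 / (1 + ξ ^ 2)) := by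
  have hm2 : 1 ≤ m ^ 2 := one_le_pow₀ hm
  have hξ := sq_nonneg ξ
  rw [w_eq_mul ξ (by positivity), mul_assoc]
  refine mul_le_mul_of_nonneg_left (le_min ?_ ?_) (by norm_num)
  · calc m ^ 2 / (ξ ^ 2 + m ^ 2) * (ξ ^ 2 / (ξ ^ 2 + 4 * m ^ 2))
        ≤ 1 * (ξ ^ 2 / (4 * m ^ 2)) := by
          gcongr
          · exact div_le_one_of_le₀ (by linarith) (by positivity)
          · linarith
      _ ≤ (1 + ξ ^ 2) / m ^ 2 := by
          rw [one_mul, div_le_div_iff₀ (by positivity) (by positivity)]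
          nlinarith
  · calc m ^ 2 / (ξ ^ 2 + m ^ 2) * (ξ ^ 2 / (ξ ^ 2 + 4 * m ^ 2))
        ≤ m ^ 2 / (1 + ξ ^ 2) * 1 := by
          refine mul_le_mul ?_ (div_le_one_of_le₀ (by linarith) (by positivity)) (by positivity)
            (by positivity)
          exact div_le_div_of_nonneg_left (by positivity) (by positivity) (by linarith)
      _ = m ^ 2 / (1 + ξ ^ 2) := mul_one _

lemma rpow_mul_min_inv_self {u : ℝ} (hu : 0 < u) (s : ℝ) :
    u ^ s * min u⁻¹ u = min (u ^ (s - 1)) (u ^ (s + 1)) := by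
  rw [mul_min_of_nonneg _ _ (rpow_nonneg hu.le s), rpow_sub_one hu.ne', rpow_add_one hu.ne',
    div_eq_mul_inv]

lemma rpow_two_mul_mul_w_le (s ξ : ℝ) {m : ℝ} (hm : 1 ≤ m) :
    m ^ (2 * s) * w ξ m ≤
      3 / 4 * (1 + ξ ^ 2) ^ s *
        min ((m ^ 2 / (1 + ξ ^ 2)) ^ (s - 1)) ((m ^ 2 / (1 + ξ ^ 2)) ^ (s + 1)) := by
  set R := 1 + ξ ^ 2
  have hR : 0 < R := by positivity
  have hu : 0 < m ^ 2 / R := by positivity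
  have hm2 : m ^ (2 * s) = R ^ s * (m ^ 2 / R) ^ s := by
    rw [rpow_mul (by positivity), rpow_two, ← mul_rpow hR.le hu.le, mul_div_cancel₀ _ hR.ne']
  calc m ^ (2 * s) * w ξ m ≤ m ^ (2 * s) * (3 / 4 * min (R / m ^ 2) (m ^ 2 / R)) :=
        mul_le_mul_of_nonneg_left (w_le_min ξ hm) (rpow_nonneg (by linarith) _)
    _ = 3 / 4 * R ^ s * ((m ^ 2 / R) ^ s * min (m ^ 2 / R)⁻¹ (m ^ 2 / R)) := by
        rw [hm2, inv_div]; ring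
    _ = _ := by rw [rpow_mul_min_inv_self hu]

section Dyadic

variable {b x : ℝ}

lemma mul_pow_rpow (hx : 0 ≤ x) (hb : 0 ≤ b) (k : ℕ) (p : ℝ) :
    (x * b ^ k) ^ p = x ^ p * (b ^ p) ^ k := by
  rw [mul_rpow hx (pow_nonneg hb k), rpow_pow_comm hb]

lemma hasSum_rpow_mul_pow (hx : 0 ≤ x) (hb : 0 ≤ b) {p : ℝ} (hp : b ^ p < 1) :
    HasSum (fun k : ℕ ↦ (x * b ^ k) ^ p) (x ^ p * (1 - b ^ p)⁻¹) := by
  simp_rw [mul_pow_rpow hx hb]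
  exact (hasSum_geometric_of_lt_one (rpow_nonneg hb p) hp).mul_left _

lemma sum_range_rpow_mul_pow_le (hx : 0 ≤ x) (hb : 0 ≤ b) {p : ℝ} (hp : 1 < b ^ p) (n : ℕ) :
    ∑ k ∈ range (n + 1), (x * b ^ k) ^ p ≤ (x * b ^ n) ^ p * (b ^ p / (b ^ p - 1)) := by
  have hq : 0 < b ^ p - 1 := sub_pos.2 hp
  simp_rw [mul_pow_rpow hx hb]
  rw [← mul_sum, geom_sum_eq hp.ne', mul_assoc]
  gcongr
  rw [← mul_div_assoc, ← pow_succ]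
  exact div_le_div_of_nonneg_right (by linarith) hq.le

variable {s : ℝ}

lemma summable_min_rpow_mul_pow (hb : 1 < b) (hs : s < 1) (hx : 0 < x) :
    Summable fun k : ℕ ↦ min ((x * b ^ k) ^ (s - 1)) ((x * b ^ k) ^ (s + 1)) :=
  Summable.of_nonneg_of_le (fun k ↦ le_min (by positivity) (by positivity))
    (fun k ↦ min_le_left _ _)
    (hasSum_rpow_mul_pow hx.le (by linarith)
      (rpow_lt_one_of_one_lt_of_neg hb (by linarith))).summable

lemma tsum_min_rpow_mul_pow_le (hb : 1 < b) (hs₁ : -1 < s) (hs₂ : s < 1) (hx : 0 < x) :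
    ∑' k : ℕ, min ((x * b ^ k) ^ (s - 1)) ((x * b ^ k) ^ (s + 1)) ≤
      (1 - b ^ (s - 1))⁻¹ + b ^ (s + 1) / (b ^ (s + 1) - 1) := by
  set g : ℕ → ℝ := fun k ↦ min ((x * b ^ k) ^ (s - 1)) ((x * b ^ k) ^ (s + 1))
  have hρ : b ^ (s - 1) < 1 := rpow_lt_one_of_one_lt_of_neg hb (by linarith)
  have hq : 1 < b ^ (s + 1) := one_lt_rpow hb (by linarith)
  have hg := summable_min_rpow_mul_pow hb hs₂ hx
  have hhead_nonneg : 0 ≤ b ^ (s + 1) / (b ^ (s + 1) - 1) :=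
    div_nonneg (by linarith) (by linarith)
  have tail_le : ∀ n, 1 ≤ x * b ^ n → ∑' j, g (j + n) ≤ (1 - b ^ (s - 1))⁻¹ := by
    intro n hn
    have hgeom := hasSum_rpow_mul_pow (x := x * b ^ n) (by linarith) (by linarith) hρ
    have hle : ∀ j, g (j + n) ≤ (x * b ^ n * b ^ j) ^ (s - 1) := fun j ↦ by
      rw [mul_assoc, ← pow_add, add_comm n j]
      exact min_le_left _ _
    calc ∑' j, g (j + n) ≤ ∑' j, (x * b ^ n * b ^ j) ^ (s - 1) :=
          Summable.tsum_le_tsum hle ((summable_nat_add_iff n).2 hg) hgeom.summable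
      _ = (x * b ^ n) ^ (s - 1) * (1 - b ^ (s - 1))⁻¹ := hgeom.tsum_eq
      _ ≤ (1 - b ^ (s - 1))⁻¹ :=
          mul_le_of_le_one_left (inv_nonneg.2 (by linarith))
            (rpow_le_one_of_one_le_of_nonpos hn (by linarith))
  rcases le_or_gt 1 x with hx1 | hx1
  · simpa using (tail_le 0 (by simpa using hx1)).trans (le_add_of_nonneg_right hhead_nonneg)
  obtain ⟨n, hn, hn'⟩ := exists_nat_pow_near (one_le_one_div hx hx1.le) hb
  rw [le_div_iff₀ hx, mul_comm] at hn
  rw [div_lt_iff₀ hx, mul_comm] at hn'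
  have head_le : ∑ k ∈ range (n + 1), g k ≤ b ^ (s + 1) / (b ^ (s + 1) - 1) :=
    calc ∑ k ∈ range (n + 1), g k ≤ ∑ k ∈ range (n + 1), (x * b ^ k) ^ (s + 1) :=
          sum_le_sum fun k _ ↦ min_le_right _ _
      _ ≤ (x * b ^ n) ^ (s + 1) * (b ^ (s + 1) / (b ^ (s + 1) - 1)) :=
          sum_range_rpow_mul_pow_le hx.le (by linarith) hq n
      _ ≤ b ^ (s + 1) / (b ^ (s + 1) - 1) :=
          mul_le_of_le_one_left hhead_nonneg
            (rpow_le_one (by positivity) hn (by linarith))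
  rw [← hg.sum_add_tsum_nat_add (n + 1), add_comm]
  exact add_le_add (tail_le (n + 1) hn'.le) head_le

end Dyadic

/-- Let `-1 < s < 1`. There exists `C = C(s) > 0` such that for every real
`κ ≥ 1` and every `ξ ∈ ℝ`, `∑_{k=1}^∞ (κ 2^k)^{2s} w(ξ; κ 2^k) ≤ C (1 + ξ²)^s`. -/
theorem stmt_9 (s : ℝ) (hs₁ : -1 < s) (hs₂ : s < 1) :
    ∃ C : ℝ, 0 < C ∧ ∀ κ : ℝ, 1 ≤ κ → ∀ ξ : ℝ,
      (∑' k : ℕ, (κ * 2 ^ (k + 1)) ^ (2 * s) * w ξ (κ * 2 ^ (k + 1)))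
        ≤ C * (1 + ξ ^ 2) ^ s := by
  have hρ : (4 : ℝ) ^ (s - 1) < 1 := rpow_lt_one_of_one_lt_of_neg (by norm_num) (by linarith)
  have hq : 1 < (4 : ℝ) ^ (s + 1) := one_lt_rpow (by norm_num) (by linarith)
  set K := (1 - (4 : ℝ) ^ (s - 1))⁻¹ + 4 ^ (s + 1) / (4 ^ (s + 1) - 1)
  have hK : 0 < K := add_pos (inv_pos.2 (by linarith)) (div_pos (by linarith) (by linarith))
  refine ⟨3 / 4 * K, by positivity, fun κ hκ ξ ↦ ?_⟩
  set x := 4 * κ ^ 2 / (1 + ξ ^ 2)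
  set g : ℕ → ℝ := fun k ↦ min ((x * 4 ^ k) ^ (s - 1)) ((x * 4 ^ k) ^ (s + 1))
  have hx : 0 < x := by positivity
  have hterm : ∀ k : ℕ,
      (κ * 2 ^ (k + 1)) ^ (2 * s) * w ξ (κ * 2 ^ (k + 1)) ≤ 3 / 4 * (1 + ξ ^ 2) ^ s * g k := by
    intro k
    have hm : 1 ≤ κ * 2 ^ (k + 1) := one_le_mul_of_one_le_of_one_le hκ (one_le_pow₀ one_le_two)
    have hmx : (κ * 2 ^ (k + 1)) ^ 2 / (1 + ξ ^ 2) = x * 4 ^ k := by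
      rw [show (4 : ℝ) ^ k = (2 ^ k) ^ 2 by rw [← pow_mul, mul_comm, pow_mul]; norm_num]
      ring
    have := rpow_two_mul_mul_w_le s ξ hm
    rwa [hmx] at this
  have hg := summable_min_rpow_mul_pow (by norm_num : (1 : ℝ) < 4) hs₂ hx
  calc ∑' k : ℕ, (κ * 2 ^ (k + 1)) ^ (2 * s) * w ξ (κ * 2 ^ (k + 1))
      ≤ ∑' k, 3 / 4 * (1 + ξ ^ 2) ^ s * g k :=
        Summable.tsum_le_tsum hterm
          (Summable.of_nonneg_of_le (fun k ↦ mul_nonneg (by positivity) (w_nonneg _ _)) hterm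
            (hg.mul_left _)) (hg.mul_left _)
    _ = 3 / 4 * (1 + ξ ^ 2) ^ s * ∑' k, g k := tsum_mul_left
    _ ≤ 3 / 4 * (1 + ξ ^ 2) ^ s * K :=
        mul_le_mul_of_nonneg_left (tsum_min_rpow_mul_pow_le (by norm_num) hs₁ hs₂ hx)
          (by positivity)
    _ = 3 / 4 * K * (1 + ξ ^ 2) ^ s := by ring
end

section
/- Let σ < s be real numbers and let (f_n) be a sequence of measurable functions f_n : ℝ → ℂ with ∫_ℝ (1 + ξ²)^s |f_n(ξ)|² dξ < ∞ for every n. Then (f_n) is Cauchy with respect to the norm (∫_ℝ (1 + ξ²)^s |·|² dξ)^{1/2} if and only if both: (a) (f_n) is Cauchy with respect to the norm (∫_ℝ (1 + ξ²)^σ |·|² dξ)^{1/2}, and (b) lim_{κ→∞} sup_n ∫_{|ξ| ≥ κ} (1 + ξ²)^s |f_n(ξ)|² dξ = 0. -/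
/-!
Write `E_t(g) = ∫ (1 + ξ²)^t |g ξ|² dξ` (`sobolevEnergy t volume g`). Since the weight increases
with `t`, `E_s`-Cauchy implies `E_σ`-Cauchy. Uniformly small tails: beyond `N` the tail of `f n` is
at most twice the tail of `f N` plus twice `E_s(f n - f N)`, and the finitely many `f k`, `k ≤ N`,
have individually small tails since `E_s(f k) < ∞`. Conversely, split `E_s(f m - f n)` at
`|ξ| = κ`: the part `|ξ| ≥ κ` is at most four times the uniform tail bound, and on `|ξ| < κ` we
have `(1 + ξ²)^s ≤ (1 + κ²)^(s - σ) (1 + ξ²)^σ`, so that part is controlled by `E_σ(f m - f n)`.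
-/

open MeasureTheory Filter ENNReal
open scoped Topology

namespace ENNReal

theorem tendsto_nhds_zero_iff_lt_ofReal {α : Type*} {l : Filter α} {v : α → ℝ≥0∞} :
    Tendsto v l (𝓝 0) ↔ ∀ ε : ℝ, 0 < ε → ∀ᶠ x in l, v x < ENNReal.ofReal ε := by
  refine ⟨fun h ε hε => h.eventually_lt_const (ENNReal.ofReal_pos.2 hε), fun h => ?_⟩
  refine tendsto_order.2 ⟨fun a ha => absurd ha not_lt_zero, fun a ha => ?_⟩
  obtain ⟨r, -, hr0, hra⟩ := ENNReal.lt_iff_exists_real_btwn.1 ha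
  filter_upwards [h r (ENNReal.ofReal_pos.1 hr0)] with x hx
  exact hx.trans hra

theorem tendsto_nhds_zero_of_le_add {α ι : Type*} {l : Filter α} {a : α → ℝ≥0∞}
    {b : ι → ℝ≥0∞} {c : ι → α → ℝ≥0∞} (hb : ∀ ε, 0 < ε → ∃ i, b i ≤ ε)
    (hc : ∀ i, Tendsto (c i) l (𝓝 0)) (h : ∀ i x, a x ≤ b i + c i x) :
    Tendsto a l (𝓝 0) := by
  refine ENNReal.tendsto_nhds_zero.2 fun ε hε => ?_
  have hε2 : 0 < ε / 2 := ENNReal.half_pos hε.ne'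
  obtain ⟨i, hi⟩ := hb _ hε2
  filter_upwards [ENNReal.tendsto_nhds_zero.1 (hc i) _ hε2] with x hx
  calc a x ≤ b i + c i x := h i x
    _ ≤ ε / 2 + ε / 2 := add_le_add hi hx
    _ = ε := ENNReal.add_halves ε

end ENNReal

theorem cauchy_rpow_half_iff_tendsto (u : ℕ → ℕ → ℝ≥0∞) :
    (∀ ε : ℝ, 0 < ε → ∃ N : ℕ, ∀ m ≥ N, ∀ n ≥ N, u m n ^ (1 / 2 : ℝ) < ENNReal.ofReal ε) ↔
      Tendsto (fun p : ℕ × ℕ => u p.1 p.2) atTop (𝓝 0) := by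
  have hroot : Tendsto (fun p : ℕ × ℕ => u p.1 p.2 ^ (1 / 2 : ℝ)) atTop (𝓝 0) ↔
      Tendsto (fun p : ℕ × ℕ => u p.1 p.2) atTop (𝓝 0) := by
    refine ⟨fun h => ?_, fun h => ?_⟩
    · have := (ENNReal.continuous_rpow_const (y := 2)).tendsto 0 |>.comp h
      simpa only [Function.comp_def, one_div, ENNReal.rpow_inv_rpow two_ne_zero,
        ENNReal.zero_rpow_of_pos two_pos] using this
    · have := (ENNReal.continuous_rpow_const (y := 1 / 2)).tendsto 0 |>.comp h
      simpa only [Function.comp_def, ENNReal.zero_rpow_of_pos one_half_pos] using this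
  rw [← hroot, ENNReal.tendsto_nhds_zero_iff_lt_ofReal]
  simp only [eventually_atTop_prod_self']

theorem tendsto_setLIntegral_abs_ge_atTop (μ : Measure ℝ) {g : ℝ → ℝ≥0∞}
    (hg : ∫⁻ ξ, g ξ ∂μ ≠ ∞) :
    Tendsto (fun κ : ℝ => ∫⁻ ξ in {ξ | κ ≤ |ξ|}, g ξ ∂μ) atTop (𝓝 0) := by
  have hmeas (κ : ℝ) : MeasurableSet {ξ : ℝ | κ ≤ |ξ|} :=
    measurableSet_le measurable_const measurable_abs
  have hempty : (⋂ κ : ℝ, {ξ : ℝ | κ ≤ |ξ|}) = ∅ :=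
    Set.eq_empty_of_forall_notMem fun ξ hξ =>
      (lt_add_one |ξ|).not_ge (Set.mem_iInter.1 hξ (|ξ| + 1))
  have := tendsto_measure_iInter_atTop (μ := μ.withDensity g)
    (fun κ => (hmeas κ).nullMeasurableSet) (fun κ κ' h ξ hξ => h.trans hξ)
    ⟨0, by
      rw [withDensity_apply _ (hmeas 0)]
      exact ne_top_of_le_ne_top hg (setLIntegral_le_lintegral _ _)⟩
  rw [hempty, measure_empty] at this
  exact this.congr fun κ => withDensity_apply _ (hmeas κ)

noncomputable def sobolevEnergy (t : ℝ) (μ : Measure ℝ) (g : ℝ → ℂ) : ℝ≥0∞ :=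
  ∫⁻ ξ, ENNReal.ofReal ((1 + ξ ^ 2) ^ t) * (‖g ξ‖₊ : ℝ≥0∞) ^ 2 ∂μ

theorem one_add_sq_rpow_le_mul_rpow {σ s κ ξ : ℝ} (hσs : σ ≤ s) (hξ : |ξ| ≤ κ) :
    (1 + ξ ^ 2) ^ s ≤ (1 + κ ^ 2) ^ (s - σ) * (1 + ξ ^ 2) ^ σ := by
  have hpos : 0 < 1 + ξ ^ 2 := by positivity
  have hsq : ξ ^ 2 ≤ κ ^ 2 := sq_le_sq' (abs_le.1 hξ).1 (abs_le.1 hξ).2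
  calc (1 + ξ ^ 2) ^ s = (1 + ξ ^ 2) ^ (s - σ) * (1 + ξ ^ 2) ^ σ := by
        rw [← Real.rpow_add hpos, sub_add_cancel]
    _ ≤ (1 + κ ^ 2) ^ (s - σ) * (1 + ξ ^ 2) ^ σ := by
        gcongr

namespace sobolevEnergy

variable {t : ℝ} {μ : Measure ℝ}

theorem mono_exponent {s : ℝ} (hts : t ≤ s) (g : ℝ → ℂ) :
    sobolevEnergy t μ g ≤ sobolevEnergy s μ g :=
  lintegral_mono fun ξ => by
    gcongr
    exact le_add_of_nonneg_right (sq_nonneg ξ)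

theorem mono_measure {ν : Measure ℝ} (hμν : μ ≤ ν) (g : ℝ → ℂ) :
    sobolevEnergy t μ g ≤ sobolevEnergy t ν g :=
  lintegral_mono' hμν le_rfl

theorem restrict_add_restrict_compl {S : Set ℝ} (hS : MeasurableSet S) (g : ℝ → ℂ) :
    sobolevEnergy t (μ.restrict S) g + sobolevEnergy t (μ.restrict Sᶜ) g =
      sobolevEnergy t μ g :=
  lintegral_add_compl _ hS

theorem le_two_mul_add {x g h : ℝ → ℂ} (hg : Measurable g)
    (hx : ∀ ξ, ‖x ξ‖₊ ≤ ‖g ξ‖₊ + ‖h ξ‖₊) :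
    sobolevEnergy t μ x ≤ 2 * (sobolevEnergy t μ g + sobolevEnergy t μ h) := by
  have hmeas : Measurable fun ξ : ℝ =>
      ENNReal.ofReal ((1 + ξ ^ 2) ^ t) * (‖g ξ‖₊ : ℝ≥0∞) ^ 2 := by
    fun_prop
  rw [sobolevEnergy, sobolevEnergy, sobolevEnergy, ← lintegral_add_left hmeas,
    ← lintegral_const_mul' _ _ ofNat_ne_top]
  refine lintegral_mono fun ξ => ?_
  have hsq : (‖x ξ‖₊ : ℝ≥0∞) ^ 2 ≤ 2 * ((‖g ξ‖₊ : ℝ≥0∞) ^ 2 + (‖h ξ‖₊ : ℝ≥0∞) ^ 2) := by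
    exact_mod_cast (pow_le_pow_left₀ zero_le (hx ξ) 2).trans add_sq_le
  calc _ ≤ ENNReal.ofReal ((1 + ξ ^ 2) ^ t) *
        (2 * ((‖g ξ‖₊ : ℝ≥0∞) ^ 2 + (‖h ξ‖₊ : ℝ≥0∞) ^ 2)) := by gcongr
    _ = _ := by ring

theorem restrict_abs_lt_le {σ s κ : ℝ} (hσs : σ ≤ s) (g : ℝ → ℂ) :
    sobolevEnergy s (μ.restrict {ξ | κ ≤ |ξ|}ᶜ) g ≤
      ENNReal.ofReal ((1 + κ ^ 2) ^ (s - σ)) * sobolevEnergy σ μ g := by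
  have hS : MeasurableSet {ξ : ℝ | κ ≤ |ξ|}ᶜ :=
    (measurableSet_le measurable_const measurable_abs).compl
  calc sobolevEnergy s (μ.restrict {ξ | κ ≤ |ξ|}ᶜ) g
      ≤ ∫⁻ ξ in {ξ | κ ≤ |ξ|}ᶜ, ENNReal.ofReal ((1 + κ ^ 2) ^ (s - σ)) *
          (ENNReal.ofReal ((1 + ξ ^ 2) ^ σ) * (‖g ξ‖₊ : ℝ≥0∞) ^ 2) ∂μ := by
        refine setLIntegral_mono' hS fun ξ hξ => ?_
        rw [← mul_assoc, ← ENNReal.ofReal_mul (by positivity)]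
        gcongr
        exact one_add_sq_rpow_le_mul_rpow hσs (show |ξ| < κ from not_le.1 hξ).le
    _ = ENNReal.ofReal ((1 + κ ^ 2) ^ (s - σ)) *
          sobolevEnergy σ (μ.restrict {ξ | κ ≤ |ξ|}ᶜ) g :=
        lintegral_const_mul' _ _ ofReal_ne_top
    _ ≤ ENNReal.ofReal ((1 + κ ^ 2) ^ (s - σ)) * sobolevEnergy σ μ g := by
        gcongr
        exact mono_measure Measure.restrict_le_self g

end sobolevEnergy

section

variable {s : ℝ} {f : ℕ → ℝ → ℂ}

theorem tendsto_iSup_sobolevEnergy_tail_of_cauchy (hmeas : ∀ n, Measurable (f n))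
    (hfin : ∀ n, sobolevEnergy s volume (f n) ≠ ∞)
    (hcauchy : Tendsto (fun p : ℕ × ℕ => sobolevEnergy s volume (f p.1 - f p.2)) atTop (𝓝 0)) :
    Tendsto (fun κ : ℝ => ⨆ n, sobolevEnergy s (volume.restrict {ξ | κ ≤ |ξ|}) (f n))
      atTop (𝓝 0) := by
  set T : ℕ → ℝ → ℝ≥0∞ := fun n κ => sobolevEnergy s (volume.restrict {ξ | κ ≤ |ξ|}) (f n)
  have hT (n : ℕ) : Tendsto (T n) atTop (𝓝 0) :=
    tendsto_setLIntegral_abs_ge_atTop volume (hfin n)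
  refine ENNReal.tendsto_nhds_zero_of_le_add
    (b := fun N => 2 * ⨆ n ≥ N, sobolevEnergy s volume (f n - f N))
    (c := fun N κ => 2 * ∑ k ∈ Finset.range (N + 1), T k κ) ?_ ?_ ?_
  · intro ε hε
    obtain ⟨N, hN⟩ := eventually_atTop_prod_self'.1
      (ENNReal.tendsto_nhds_zero.1 hcauchy (ε / 2) (ENNReal.half_pos hε.ne'))
    refine ⟨N, ?_⟩
    calc 2 * ⨆ n ≥ N, sobolevEnergy s volume (f n - f N) ≤ 2 * (ε / 2) := by
          gcongr
          exact iSup₂_le fun n hn => hN n hn N le_rfl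
      _ = ε := ENNReal.mul_div_cancel two_ne_zero ofNat_ne_top
  · intro N
    simpa using ENNReal.Tendsto.const_mul (tendsto_finsetSum _ fun k _ => hT k)
      (Or.inr ofNat_ne_top)
  · intro N κ
    refine iSup_le fun n => ?_
    rcases le_total n N with hnN | hNn
    · calc T n κ ≤ ∑ k ∈ Finset.range (N + 1), T k κ :=
            Finset.single_le_sum (f := (T · κ)) (fun _ _ => zero_le)
              (Finset.mem_range_succ_iff.2 hnN)
        _ ≤ 2 * ∑ k ∈ Finset.range (N + 1), T k κ := le_mul_of_one_le_left' one_le_two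
        _ ≤ _ := le_add_self
    · calc T n κ ≤ 2 * (T N κ + sobolevEnergy s (volume.restrict {ξ | κ ≤ |ξ|}) (f n - f N)) :=
            sobolevEnergy.le_two_mul_add (hmeas N) fun ξ => by
              simpa [add_comm] using nnnorm_add_le (f n ξ - f N ξ) (f N ξ)
        _ ≤ 2 * (T N κ + sobolevEnergy s volume (f n - f N)) := by
            gcongr
            exact sobolevEnergy.mono_measure Measure.restrict_le_self _
        _ = 2 * sobolevEnergy s volume (f n - f N) + 2 * T N κ := by ring
        _ ≤ _ := by
            gcongr
            · exact le_iSup₂ (f := fun n (_ : n ≥ N) => sobolevEnergy s volume (f n - f N)) n hNn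
            · exact Finset.single_le_sum (f := (T · κ)) (fun _ _ => zero_le)
                (Finset.self_mem_range_succ N)

theorem tendsto_sobolevEnergy_sub_of_iSup_tail {σ : ℝ} (hσs : σ ≤ s)
    (hmeas : ∀ n, Measurable (f n))
    (hcauchy : Tendsto (fun p : ℕ × ℕ => sobolevEnergy σ volume (f p.1 - f p.2)) atTop (𝓝 0))
    (htail : Tendsto (fun κ : ℝ => ⨆ n, sobolevEnergy s (volume.restrict {ξ | κ ≤ |ξ|}) (f n))
      atTop (𝓝 0)) :
    Tendsto (fun p : ℕ × ℕ => sobolevEnergy s volume (f p.1 - f p.2)) atTop (𝓝 0) := by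
  set S : ℝ → ℝ≥0∞ := fun κ => ⨆ n, sobolevEnergy s (volume.restrict {ξ | κ ≤ |ξ|}) (f n)
  refine ENNReal.tendsto_nhds_zero_of_le_add (b := fun κ => 2 * (S κ + S κ))
    (c := fun κ p => ENNReal.ofReal ((1 + κ ^ 2) ^ (s - σ)) *
      sobolevEnergy σ volume (f p.1 - f p.2)) ?_ ?_ ?_
  · intro ε hε
    have h2S : Tendsto (fun κ => 2 * (S κ + S κ)) atTop (𝓝 0) := by
      simpa using ENNReal.Tendsto.const_mul (htail.add htail) (Or.inr ofNat_ne_top)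
    exact (ENNReal.tendsto_nhds_zero.1 h2S ε hε).exists
  · intro κ
    simpa using ENNReal.Tendsto.const_mul hcauchy (Or.inr ofReal_ne_top)
  · rintro κ ⟨m, n⟩
    have hS : MeasurableSet {ξ : ℝ | κ ≤ |ξ|} := measurableSet_le measurable_const measurable_abs
    rw [← sobolevEnergy.restrict_add_restrict_compl hS]
    gcongr
    · calc _ ≤ 2 * (sobolevEnergy s (volume.restrict {ξ | κ ≤ |ξ|}) (f m) +
              sobolevEnergy s (volume.restrict {ξ | κ ≤ |ξ|}) (f n)) :=
            sobolevEnergy.le_two_mul_add (hmeas m) fun ξ => nnnorm_sub_le _ _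
        _ ≤ 2 * (S κ + S κ) := by
            gcongr <;> exact le_iSup (fun k => sobolevEnergy s (volume.restrict _) (f k)) _
    · exact sobolevEnergy.restrict_abs_lt_le hσs _

end

/-- let `σ < s` and `(f_n)` a sequence of measurable `f_n : ℝ → ℂ` (playing
the role of the Fourier transforms of a sequence in `H^s`) with
`∫ (1+ξ²)^s |f_n(ξ)|² dξ < ∞` for all `n`. Then `(f_n)` is Cauchy in the `H^s`-type norm
`(∫ (1+ξ²)^s |·|² dξ)^{1/2}` iff it is Cauchy in the `H^σ`-type norm and
`lim_{κ→∞} sup_n ∫_{|ξ|≥κ} (1+ξ²)^s |f_n(ξ)|² dξ = 0`. -/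
theorem stmt_14 (s σ : ℝ) (hσ : σ < s) (f : ℕ → ℝ → ℂ)
    (hmeas : ∀ n, Measurable (f n))
    (hfin : ∀ n, (∫⁻ ξ : ℝ,
      ENNReal.ofReal ((1 + ξ ^ 2) ^ s) * (‖f n ξ‖₊ : ℝ≥0∞) ^ 2) < ⊤) :
    (∀ ε : ℝ, 0 < ε → ∃ N : ℕ, ∀ m ≥ N, ∀ n ≥ N,
        (∫⁻ ξ : ℝ, ENNReal.ofReal ((1 + ξ ^ 2) ^ s) *
          (‖f m ξ - f n ξ‖₊ : ℝ≥0∞) ^ 2) ^ (1 / 2 : ℝ) < ENNReal.ofReal ε)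
    ↔ ((∀ ε : ℝ, 0 < ε → ∃ N : ℕ, ∀ m ≥ N, ∀ n ≥ N,
        (∫⁻ ξ : ℝ, ENNReal.ofReal ((1 + ξ ^ 2) ^ σ) *
          (‖f m ξ - f n ξ‖₊ : ℝ≥0∞) ^ 2) ^ (1 / 2 : ℝ) < ENNReal.ofReal ε)
      ∧ Tendsto
          (fun κ : ℝ => ⨆ n : ℕ, ∫⁻ ξ : ℝ in {ξ : ℝ | κ ≤ |ξ|},
            ENNReal.ofReal ((1 + ξ ^ 2) ^ s) * (‖f n ξ‖₊ : ℝ≥0∞) ^ 2)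
          atTop (nhds 0)) := by
  rw [cauchy_rpow_half_iff_tendsto, cauchy_rpow_half_iff_tendsto]
  change Tendsto (fun p : ℕ × ℕ => sobolevEnergy s volume (f p.1 - f p.2)) atTop (𝓝 0) ↔
    Tendsto (fun p : ℕ × ℕ => sobolevEnergy σ volume (f p.1 - f p.2)) atTop (𝓝 0) ∧
      Tendsto (fun κ : ℝ => ⨆ n, sobolevEnergy s (volume.restrict {ξ | κ ≤ |ξ|}) (f n))
        atTop (𝓝 0)
  constructor
  · intro hs
    exact ⟨tendsto_of_tendsto_of_tendsto_of_le_of_le tendsto_const_nhds hs (fun _ => zero_le)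
        fun _ => sobolevEnergy.mono_exponent hσ.le _,
      tendsto_iSup_sobolevEnergy_tail_of_cauchy hmeas (fun n => (hfin n).ne) hs⟩
  · rintro ⟨hσc, htail⟩
    exact tendsto_sobolevEnergy_sub_of_iSup_tail hσ.le hmeas hσc htail
end

section
/- Let 0 ≤ s < 1 and let G be a nonempty set of measurable functions g : ℝ → [0, ∞) with sup_{g∈G} ∫_ℝ (1 + ξ²)^s g(ξ) dξ < ∞. Then lim_{κ→∞} sup_{g∈G} ∫_{|ξ| ≥ κ} (1 + ξ²)^s g(ξ) dξ = 0 if and only if lim_{κ→∞} sup_{g∈G} ∫_ℝ ξ⁴ (ξ² + 4κ²)^{-(2-s)} g(ξ) dξ = 0. -/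
/-!
On `|ξ| ≥ κ ≥ 1/2` the kernel `ξ⁴ (ξ² + 4κ²)^{s-2}` dominates `(1 + ξ²)^s / 25`, so the tail
integrals are controlled by the kernel integrals. Conversely the kernel is at most `(1 + ξ²)^s`
everywhere and at most `κ⁻¹ (1 + ξ²)^s` on `ξ² ≤ κ`, so for `κ ≥ 1` the kernel integral is bounded
by `κ⁻¹` times the uniform bound plus the tail beyond `√κ`.
-/

open Real MeasureTheory Filter ENNReal

section KernelBounds

variable {s x d : ℝ}

lemma rpow_le_mul_sq_mul_rpow_neg (hs : 0 ≤ s) (hd : 1 + x ≤ d) (hd' : d ≤ 5 * x) :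
    (1 + x) ^ s ≤ 25 * (x ^ 2 * d ^ (-(2 - s))) := by
  have hd₀ : 0 < d := by linarith
  have hsplit : x ^ 2 * d ^ (-(2 - s)) = (x / d) ^ 2 * d ^ s := by
    rw [neg_sub, Real.rpow_sub hd₀, Real.rpow_two, div_pow]
    field_simp
  have hratio : 1 ≤ 25 * (x / d) ^ 2 := by
    rw [div_pow, mul_div_assoc', le_div_iff₀ (by positivity)]
    nlinarith
  calc (1 + x) ^ s ≤ d ^ s := Real.rpow_le_rpow (by linarith) hd hs
    _ ≤ 25 * (x / d) ^ 2 * d ^ s := le_mul_of_one_le_left (by positivity) hratio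
    _ = 25 * (x ^ 2 * d ^ (-(2 - s))) := by rw [hsplit, mul_assoc]

lemma sq_mul_rpow_neg_le (hs : s ≤ 1) (hx : 0 ≤ x) (hd : 1 + x ≤ d) :
    x ^ 2 * d ^ (-(2 - s)) ≤ (1 + x) / d * (1 + x) ^ s := by
  have hx₁ : 0 < 1 + x := by linarith
  have hd₀ : 0 < d := by linarith
  have hr₀ : 0 < (1 + x) / d := div_pos hx₁ hd₀
  have hfactor : (1 + x) ^ 2 * d ^ (-(2 - s)) = ((1 + x) / d) ^ (2 - s) * (1 + x) ^ s := by
    have hpow : (1 + x) ^ (2 - s) * (1 + x) ^ s = (1 + x) ^ 2 := by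
      rw [← Real.rpow_add hx₁, sub_add_cancel, Real.rpow_two]
    rw [Real.div_rpow hx₁.le hd₀.le, Real.rpow_neg hd₀.le, ← hpow]
    ring
  calc x ^ 2 * d ^ (-(2 - s)) ≤ (1 + x) ^ 2 * d ^ (-(2 - s)) :=
        mul_le_mul_of_nonneg_right (by nlinarith) (Real.rpow_nonneg hd₀.le _)
    _ = ((1 + x) / d) ^ (2 - s) * (1 + x) ^ s := hfactor
    _ ≤ ((1 + x) / d) ^ (1 : ℝ) * (1 + x) ^ s :=
        mul_le_mul_of_nonneg_right
          (Real.rpow_le_rpow_of_exponent_ge hr₀ ((div_le_one hd₀).2 hd) (by linarith))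
          (Real.rpow_nonneg hx₁.le _)
    _ = (1 + x) / d * (1 + x) ^ s := by rw [Real.rpow_one]

end KernelBounds

/-- With `w = (1 + ξ²)^s` and `G` the squared moduli of Fourier transforms, this is the supremum
of the squared `H^s` norms, restricted to the frequencies seen by `μ`. -/
noncomputable def supWeightedLIntegral {α : Type*} [MeasurableSpace α] (G : Set (α → NNReal))
    (μ : Measure α) (w : α → ℝ) : ℝ≥0∞ :=
  ⨆ g ∈ G, ∫⁻ x, ENNReal.ofReal (w x) * (g x : ℝ≥0∞) ∂μ

namespace supWeightedLIntegral

variable {α : Type*} [MeasurableSpace α] {G : Set (α → NNReal)} {μ ν : Measure α} {w v : α → ℝ}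

lemma lintegral_le {g : α → NNReal} (hg : g ∈ G) :
    ∫⁻ x, ENNReal.ofReal (w x) * (g x : ℝ≥0∞) ∂μ ≤ supWeightedLIntegral G μ w :=
  le_iSup₂ (f := fun g (_ : g ∈ G) => ∫⁻ x, ENNReal.ofReal (w x) * (g x : ℝ≥0∞) ∂μ) g hg

lemma mono_ae (h : ∀ᵐ x ∂μ, w x ≤ v x) :
    supWeightedLIntegral G μ w ≤ supWeightedLIntegral G μ v :=
  iSup₂_mono fun _ _ => lintegral_mono_ae <| h.mono fun _ hx => by gcongr

lemma mono_measure (h : μ ≤ ν) : supWeightedLIntegral G μ w ≤ supWeightedLIntegral G ν w :=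
  iSup₂_mono fun _ _ => lintegral_mono' h le_rfl

lemma const_mul {c : ℝ} (hc : 0 ≤ c) :
    supWeightedLIntegral G μ (fun x => c * w x) = ENNReal.ofReal c * supWeightedLIntegral G μ w := by
  simp only [supWeightedLIntegral, ENNReal.mul_iSup, ENNReal.ofReal_mul hc, mul_assoc]
  simp only [lintegral_const_mul' _ _ ENNReal.ofReal_ne_top]

lemma le_restrict_add_restrict_compl {A : Set α} (hA : MeasurableSet A) :
    supWeightedLIntegral G μ w ≤
      supWeightedLIntegral G (μ.restrict A) w + supWeightedLIntegral G (μ.restrict Aᶜ) w :=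
  iSup₂_le fun g hg => by
    rw [← lintegral_add_compl _ hA]
    exact add_le_add (lintegral_le hg) (lintegral_le hg)

end supWeightedLIntegral

section SobolevTails

open supWeightedLIntegral

variable {s κ : ℝ} {G : Set (ℝ → NNReal)}

lemma supWeightedLIntegral_tail_le (hs : 0 ≤ s) (hκ : 1 / 2 ≤ κ) :
    supWeightedLIntegral G (volume.restrict {ξ | κ ≤ |ξ|}) (fun ξ => (1 + ξ ^ 2) ^ s) ≤
      ENNReal.ofReal 25 *
        supWeightedLIntegral G volume (fun ξ => ξ ^ 4 * (ξ ^ 2 + 4 * κ ^ 2) ^ (-(2 - s))) := by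
  have hT : MeasurableSet {ξ : ℝ | κ ≤ |ξ|} := measurableSet_le measurable_const measurable_abs
  calc _ ≤ supWeightedLIntegral G (volume.restrict {ξ | κ ≤ |ξ|})
          (fun ξ => 25 * (ξ ^ 4 * (ξ ^ 2 + 4 * κ ^ 2) ^ (-(2 - s)))) := by
        refine mono_ae (ae_restrict_of_forall_mem hT fun ξ (hξ : κ ≤ |ξ|) => ?_)
        rw [show ξ ^ 4 = (ξ ^ 2) ^ 2 by ring]
        exact rpow_le_mul_sq_mul_rpow_neg hs (by nlinarith)
          (by nlinarith [sq_abs ξ, abs_nonneg ξ])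
    _ = ENNReal.ofReal 25 * supWeightedLIntegral G (volume.restrict {ξ | κ ≤ |ξ|})
          (fun ξ => ξ ^ 4 * (ξ ^ 2 + 4 * κ ^ 2) ^ (-(2 - s))) := const_mul (by norm_num)
    _ ≤ _ := by gcongr; exact mono_measure Measure.restrict_le_self

lemma supWeightedLIntegral_kernel_le (hs : s ≤ 1) (hκ : 1 ≤ κ) :
    supWeightedLIntegral G volume (fun ξ => ξ ^ 4 * (ξ ^ 2 + 4 * κ ^ 2) ^ (-(2 - s))) ≤
      ENNReal.ofReal κ⁻¹ * supWeightedLIntegral G volume (fun ξ => (1 + ξ ^ 2) ^ s) +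
        supWeightedLIntegral G (volume.restrict {ξ | √κ ≤ |ξ|}) (fun ξ => (1 + ξ ^ 2) ^ s) := by
  have hκ₀ : 0 < κ := by linarith
  have hkernel (ξ : ℝ) : ξ ^ 4 * (ξ ^ 2 + 4 * κ ^ 2) ^ (-(2 - s)) ≤
      (1 + ξ ^ 2) / (ξ ^ 2 + 4 * κ ^ 2) * (1 + ξ ^ 2) ^ s := by
    rw [show ξ ^ 4 = (ξ ^ 2) ^ 2 by ring]
    exact sq_mul_rpow_neg_le hs (sq_nonneg ξ) (by nlinarith)
  have hA : MeasurableSet {ξ : ℝ | ξ ^ 2 ≤ κ} :=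
    measurableSet_le (by fun_prop) measurable_const
  have hAc : {ξ : ℝ | ξ ^ 2 ≤ κ}ᶜ ⊆ {ξ | √κ ≤ |ξ|} := fun ξ (hξ : ¬ξ ^ 2 ≤ κ) =>
    (Real.sqrt_le_sqrt (not_le.1 hξ).le).trans_eq (Real.sqrt_sq_eq_abs ξ)
  calc _ ≤ _ := le_restrict_add_restrict_compl hA
    _ ≤ supWeightedLIntegral G (volume.restrict {ξ | ξ ^ 2 ≤ κ})
          (fun ξ => κ⁻¹ * (1 + ξ ^ 2) ^ s) +
        supWeightedLIntegral G (volume.restrict {ξ | √κ ≤ |ξ|}) (fun ξ => (1 + ξ ^ 2) ^ s) := by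
        refine add_le_add (mono_ae (ae_restrict_of_forall_mem hA fun ξ (hξ : ξ ^ 2 ≤ κ) => ?_))
          ((mono_ae (ae_restrict_of_forall_mem hA.compl fun ξ _ => ?_)).trans
            (mono_measure (Measure.restrict_mono hAc le_rfl)))
        · refine (hkernel ξ).trans (mul_le_mul_of_nonneg_right ?_ (by positivity))
          rw [div_le_iff₀ (by positivity), inv_mul_eq_div, le_div_iff₀ hκ₀]
          nlinarith
        · refine (hkernel ξ).trans (mul_le_of_le_one_left (by positivity) ?_)
          rw [div_le_one (by positivity)]
          nlinarith
    _ ≤ _ := by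
        rw [const_mul (inv_nonneg.2 hκ₀.le)]
        gcongr
        exact mono_measure Measure.restrict_le_self

end SobolevTails

theorem stmt_16_general (s : ℝ) (hs₁ : 0 ≤ s) (hs₂ : s < 1)
    (G : Set (ℝ → NNReal))
    (hM : (⨆ g ∈ G, ∫⁻ ξ : ℝ, ENNReal.ofReal ((1 + ξ ^ 2) ^ s) * (g ξ : ℝ≥0∞)) < ⊤) :
    Tendsto
      (fun κ : ℝ => ⨆ g ∈ G, ∫⁻ ξ : ℝ in {ξ : ℝ | κ ≤ |ξ|},
        ENNReal.ofReal ((1 + ξ ^ 2) ^ s) * (g ξ : ℝ≥0∞))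
      atTop (nhds 0)
    ↔ Tendsto
      (fun κ : ℝ => ⨆ g ∈ G, ∫⁻ ξ : ℝ,
        ENNReal.ofReal (ξ ^ 4 * (ξ ^ 2 + 4 * κ ^ 2) ^ (-(2 - s))) * (g ξ : ℝ≥0∞))
      atTop (nhds 0) := by
  constructor
  · intro htail
    have hbound := (ENNReal.Tendsto.mul_const (ENNReal.tendsto_ofReal tendsto_inv_atTop_zero)
      (Or.inr hM.ne)).add (htail.comp Real.tendsto_sqrt_atTop)
    rw [ENNReal.ofReal_zero, zero_mul, zero_add] at hbound
    refine tendsto_of_tendsto_of_tendsto_of_le_of_le' tendsto_const_nhds hbound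
      (Eventually.of_forall fun _ => zero_le) ?_
    filter_upwards [eventually_ge_atTop 1] with κ hκ using
      supWeightedLIntegral_kernel_le hs₂.le hκ
  · intro hkernel
    have hbound := ENNReal.Tendsto.const_mul hkernel (Or.inr (ENNReal.ofReal_ne_top (r := 25)))
    rw [mul_zero] at hbound
    refine tendsto_of_tendsto_of_tendsto_of_le_of_le' tendsto_const_nhds hbound
      (Eventually.of_forall fun _ => zero_le) ?_
    filter_upwards [eventually_ge_atTop (1 / 2)] with κ hκ using
      supWeightedLIntegral_tail_le hs₁ hκ

/-- Let `0 ≤ s < 1` and `G` a nonempty family of measurable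
`g : ℝ → [0,∞)` with `sup_{g∈G} ∫ (1+ξ²)^s g(ξ) dξ < ∞`. Then
`lim_{κ→∞} sup_{g∈G} ∫_{|ξ|≥κ} (1+ξ²)^s g(ξ) dξ = 0` iff
`lim_{κ→∞} sup_{g∈G} ∫ ξ⁴ (ξ²+4κ²)^{-(2-s)} g(ξ) dξ = 0`. -/
theorem stmt_16 (s : ℝ) (hs₁ : 0 ≤ s) (hs₂ : s < 1)
    (G : Set (ℝ → NNReal)) (hG : G.Nonempty)
    (hmeas : ∀ g ∈ G, Measurable g)
    (hM : (⨆ g ∈ G, ∫⁻ ξ : ℝ, ENNReal.ofReal ((1 + ξ ^ 2) ^ s) * (g ξ : ℝ≥0∞)) < ⊤) :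
    Tendsto
      (fun κ : ℝ => ⨆ g ∈ G, ∫⁻ ξ : ℝ in {ξ : ℝ | κ ≤ |ξ|},
        ENNReal.ofReal ((1 + ξ ^ 2) ^ s) * (g ξ : ℝ≥0∞))
      atTop (nhds 0)
    ↔ Tendsto
      (fun κ : ℝ => ⨆ g ∈ G, ∫⁻ ξ : ℝ,
        ENNReal.ofReal (ξ ^ 4 * (ξ ^ 2 + 4 * κ ^ 2) ^ (-(2 - s))) * (g ξ : ℝ≥0∞))
      atTop (nhds 0) :=
  stmt_16_general s hs₁ hs₂ G hM
end

section
/- Let 0 ≤ s < 1 and let G be a nonempty set of measurable functions g : ℝ → [0, ∞) with sup_{g∈G} ∫_ℝ (1 + ξ²)^s g(ξ) dξ < ∞. Then lim_{κ→∞} sup_{g∈G} ∫_{|ξ| ≥ κ} (1 + ξ²)^s g(ξ) dξ = 0 if and only if lim_{κ→∞} sup_{g∈G} ∫_ℝ ξ² (ξ² + 4κ²)^{-(1-s)} g(ξ) dξ = 0. -/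
/-! The multiplier `ξ² (ξ² + 4κ²)^(s-1)` is dominated by the weight `(1 + ξ²)^s` everywhere,
is at least a fifth of it where `1 ≤ κ ≤ |ξ|`, and tends to `0` uniformly on `|ξ| < r` as
`κ → ∞`. Comparability on `|ξ| ≥ κ` gives `⇐`. For `⇒`, split at a fixed large radius `r`:
the part `|ξ| ≥ r` is controlled by the uniform tail, the part `|ξ| < r` by the uniform bound
on `∫ (1 + ξ²)^s g` times a factor that vanishes as `κ → ∞`. -/

open Real MeasureTheory Filter ENNReal
open scoped Topology

section UniformTails

variable {α ι β : Type*} [MeasurableSpace α] {μ : Measure α} {S : Set ι}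
  {g : ι → α → ℝ≥0∞} {w : α → ℝ≥0∞} {m : β → α → ℝ≥0∞} {l : Filter β}

theorem tendsto_iSup_lintegral_of_tendsto_iSup_setLIntegral {A : ℝ → Set α}
    (hA : ∀ r, MeasurableSet (A r)) (hM : ⨆ i ∈ S, ∫⁻ x, w x * g i x ∂μ ≠ ∞)
    (htail : Tendsto (fun r => ⨆ i ∈ S, ∫⁻ x in A r, w x * g i x ∂μ) atTop (𝓝 0))
    (hmw : ∀ κ x, m κ x ≤ w x)
    (hlow : ∀ r, ∀ ε > 0, ∀ᶠ κ in l, ∀ x ∉ A r, m κ x ≤ ε * w x) :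
    Tendsto (fun κ => ⨆ i ∈ S, ∫⁻ x, m κ x * g i x ∂μ) l (𝓝 0) := by
  rw [ENNReal.tendsto_nhds_zero] at htail ⊢
  intro η hη
  have hη₂ : η / 2 ≠ 0 := by simpa using hη.ne'
  obtain ⟨r, hr⟩ := (htail (η / 2) (pos_iff_ne_zero.2 hη₂)).exists
  obtain ⟨ε, hε, hεM⟩ := ENNReal.exists_nnreal_pos_mul_lt hM hη₂
  filter_upwards [hlow r ε (by exact_mod_cast hε)] with κ hκ
  refine iSup₂_le fun i hi => ?_
  calc ∫⁻ x, m κ x * g i x ∂μ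
      = ∫⁻ x in A r, m κ x * g i x ∂μ + ∫⁻ x in (A r)ᶜ, m κ x * g i x ∂μ :=
        (lintegral_add_compl _ (hA r)).symm
    _ ≤ ∫⁻ x in A r, w x * g i x ∂μ + ∫⁻ x in (A r)ᶜ, ε * (w x * g i x) ∂μ := by
        gcongr ?_ + ?_
        · exact lintegral_mono fun x => mul_le_mul_left (hmw κ x) _
        · refine setLIntegral_mono' (hA r).compl fun x hx => ?_
          rw [← mul_assoc]
          exact mul_le_mul_left (hκ x hx) _
    _ ≤ η / 2 + ε * ⨆ i ∈ S, ∫⁻ x, w x * g i x ∂μ := by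
        gcongr
        · exact (le_iSup₂ (f := fun i _ => ∫⁻ x in A r, w x * g i x ∂μ) i hi).trans hr
        · rw [lintegral_const_mul' _ _ coe_ne_top]
          exact mul_le_mul_right ((setLIntegral_le_lintegral _ _).trans
            (le_iSup₂ (f := fun i _ => ∫⁻ x, w x * g i x ∂μ) i hi)) _
    _ ≤ η / 2 + η / 2 := add_le_add le_rfl hεM.le
    _ = η := ENNReal.add_halves η

theorem tendsto_iSup_setLIntegral_of_le_mul {A : β → Set α} {C : ℝ≥0∞}
    (hA : ∀ κ, MeasurableSet (A κ)) (hC : C ≠ ∞)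
    (hwm : ∀ᶠ κ in l, ∀ x ∈ A κ, w x ≤ C * m κ x)
    (h : Tendsto (fun κ => ⨆ i ∈ S, ∫⁻ x, m κ x * g i x ∂μ) l (𝓝 0)) :
    Tendsto (fun κ => ⨆ i ∈ S, ∫⁻ x in A κ, w x * g i x ∂μ) l (𝓝 0) := by
  have hC0 : Tendsto (fun κ => C * ⨆ i ∈ S, ∫⁻ x, m κ x * g i x ∂μ) l (𝓝 0) := by
    simpa using ENNReal.Tendsto.const_mul h (Or.inr hC)
  refine tendsto_of_tendsto_of_tendsto_of_le_of_le' tendsto_const_nhds hC0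
    (Eventually.of_forall fun _ => bot_le) ?_
  filter_upwards [hwm] with κ hκ
  refine iSup₂_le fun i hi => ?_
  calc ∫⁻ x in A κ, w x * g i x ∂μ
      ≤ ∫⁻ x in A κ, C * (m κ x * g i x) ∂μ := setLIntegral_mono' (hA κ) fun x hx => by
        rw [← mul_assoc]
        exact mul_le_mul_left (hκ x hx) _
    _ ≤ C * ∫⁻ x, m κ x * g i x ∂μ := by
        rw [← lintegral_const_mul' _ _ hC]
        exact setLIntegral_le_lintegral _ _
    _ ≤ C * ⨆ i ∈ S, ∫⁻ x, m κ x * g i x ∂μ :=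
        mul_le_mul_right (le_iSup₂ (f := fun i _ => ∫⁻ x, m κ x * g i x ∂μ) i hi) _

end UniformTails

section Multiplier

variable {s : ℝ}

lemma mul_rpow_neg_one_sub {a : ℝ} (ha : 0 < a) : a * a ^ (-(1 - s)) = a ^ s := by
  calc a * a ^ (-(1 - s)) = a ^ (1 + -(1 - s)) := by rw [rpow_add ha, Real.rpow_one]
    _ = a ^ s := by ring_nf

lemma sq_mul_rpow_le_one_add_sq_rpow (hs₀ : 0 ≤ s) (hs : s ≤ 1) (ξ κ : ℝ) :
    ξ ^ 2 * (ξ ^ 2 + 4 * κ ^ 2) ^ (-(1 - s)) ≤ (1 + ξ ^ 2) ^ s := by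
  rcases eq_or_ne ξ 0 with rfl | hξ
  · rw [zero_pow two_ne_zero, zero_mul]
    positivity
  have hξ2 : 0 < ξ ^ 2 := by positivity
  calc ξ ^ 2 * (ξ ^ 2 + 4 * κ ^ 2) ^ (-(1 - s))
      ≤ ξ ^ 2 * (ξ ^ 2) ^ (-(1 - s)) :=
        mul_le_mul_of_nonneg_left
          (rpow_le_rpow_of_nonpos hξ2 (by nlinarith) (by linarith)) hξ2.le
    _ = (ξ ^ 2) ^ s := mul_rpow_neg_one_sub hξ2
    _ ≤ (1 + ξ ^ 2) ^ s := by gcongr; linarith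

lemma sq_mul_rpow_le_of_abs_le (hs : s ≤ 1) {r κ ξ : ℝ} (hκ : κ ≠ 0) (hξ : |ξ| ≤ r) :
    ξ ^ 2 * (ξ ^ 2 + 4 * κ ^ 2) ^ (-(1 - s)) ≤ r ^ 2 * (4 * κ ^ 2) ^ (-(1 - s)) := by
  have hκ2 : 0 < 4 * κ ^ 2 := by positivity
  refine mul_le_mul ?_ (rpow_le_rpow_of_nonpos hκ2 (by nlinarith) (by linarith))
    (rpow_nonneg (by positivity) _) (sq_nonneg r)
  rw [← sq_abs]
  exact pow_le_pow_left₀ (abs_nonneg ξ) hξ 2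

lemma one_add_sq_rpow_le_five_mul (hs₀ : 0 ≤ s) (hs : s ≤ 1) {κ ξ : ℝ} (hκ : 1 ≤ κ)
    (hξ : κ ≤ |ξ|) :
    (1 + ξ ^ 2) ^ s ≤ 5 * (ξ ^ 2 * (ξ ^ 2 + 4 * κ ^ 2) ^ (-(1 - s))) := by
  have hκξ : κ ^ 2 ≤ ξ ^ 2 := by
    rw [← sq_abs ξ]
    gcongr
  have hξ2 : 0 < ξ ^ 2 := by nlinarith
  calc (1 + ξ ^ 2) ^ s ≤ (5 * ξ ^ 2) ^ s := by gcongr; nlinarith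
    _ = 5 * (ξ ^ 2 * (5 * ξ ^ 2) ^ (-(1 - s))) := by
        rw [← mul_rpow_neg_one_sub (by positivity)]
        ring
    _ ≤ 5 * (ξ ^ 2 * (ξ ^ 2 + 4 * κ ^ 2) ^ (-(1 - s))) := by
        gcongr 5 * (ξ ^ 2 * ?_)
        exact rpow_le_rpow_of_nonpos (by positivity) (by linarith) (by linarith)

lemma tendsto_sq_mul_four_mul_sq_rpow (hs : s < 1) (r : ℝ) :
    Tendsto (fun κ : ℝ => r ^ 2 * (4 * κ ^ 2) ^ (-(1 - s))) atTop (𝓝 0) := by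
  have h4κ : Tendsto (fun κ : ℝ => 4 * κ ^ 2) atTop atTop :=
    (tendsto_pow_atTop two_ne_zero).const_mul_atTop four_pos
  have := ((tendsto_rpow_neg_atTop (by linarith : 0 < 1 - s)).comp h4κ).const_mul (r ^ 2)
  rwa [mul_zero] at this

lemma eventually_ofReal_sq_mul_rpow_le (hs₀ : 0 ≤ s) (hs : s < 1) (r : ℝ) {ε : ℝ≥0∞}
    (hε : 0 < ε) :
    ∀ᶠ κ in atTop, ∀ ξ ∉ {ξ : ℝ | r ≤ |ξ|},
      ENNReal.ofReal (ξ ^ 2 * (ξ ^ 2 + 4 * κ ^ 2) ^ (-(1 - s)))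
        ≤ ε * ENNReal.ofReal ((1 + ξ ^ 2) ^ s) := by
  have hδ := ENNReal.tendsto_ofReal (tendsto_sq_mul_four_mul_sq_rpow hs r)
  rw [ofReal_zero] at hδ
  filter_upwards [hδ.eventually (gt_mem_nhds hε), eventually_ne_atTop 0] with κ hκε hκ ξ hξ
  have hw : 1 ≤ ENNReal.ofReal ((1 + ξ ^ 2) ^ s) :=
    one_le_ofReal.2 (one_le_rpow (by nlinarith) hs₀)
  calc ENNReal.ofReal (ξ ^ 2 * (ξ ^ 2 + 4 * κ ^ 2) ^ (-(1 - s)))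
      ≤ ENNReal.ofReal (r ^ 2 * (4 * κ ^ 2) ^ (-(1 - s))) :=
        ofReal_le_ofReal (sq_mul_rpow_le_of_abs_le hs.le hκ (not_le.1 hξ).le)
    _ ≤ ε * ENNReal.ofReal ((1 + ξ ^ 2) ^ s) := hκε.le.trans (le_mul_of_one_le_right' hw)

end Multiplier

theorem stmt_17_general (s : ℝ) (hs₁ : 0 ≤ s) (hs₂ : s < 1)
    (G : Set (ℝ → NNReal))
    (hM : (⨆ g ∈ G, ∫⁻ ξ : ℝ, ENNReal.ofReal ((1 + ξ ^ 2) ^ s) * (g ξ : ℝ≥0∞)) < ⊤) :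
    Tendsto
      (fun κ : ℝ => ⨆ g ∈ G, ∫⁻ ξ : ℝ in {ξ : ℝ | κ ≤ |ξ|},
        ENNReal.ofReal ((1 + ξ ^ 2) ^ s) * (g ξ : ℝ≥0∞))
      atTop (nhds 0)
    ↔ Tendsto
      (fun κ : ℝ => ⨆ g ∈ G, ∫⁻ ξ : ℝ,
        ENNReal.ofReal (ξ ^ 2 * (ξ ^ 2 + 4 * κ ^ 2) ^ (-(1 - s))) * (g ξ : ℝ≥0∞))
      atTop (nhds 0) := by
  have hA (κ : ℝ) : MeasurableSet {ξ : ℝ | κ ≤ |ξ|} :=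
    measurableSet_le measurable_const measurable_abs
  constructor
  · intro htail
    exact tendsto_iSup_lintegral_of_tendsto_iSup_setLIntegral hA hM.ne htail
      (fun κ ξ => ofReal_le_ofReal (sq_mul_rpow_le_one_add_sq_rpow hs₁ hs₂.le ξ κ))
      fun r _ hε => eventually_ofReal_sq_mul_rpow_le hs₁ hs₂ r hε
  · refine tendsto_iSup_setLIntegral_of_le_mul (C := 5) hA ofNat_ne_top ?_
    filter_upwards [eventually_ge_atTop 1] with κ hκ ξ hξ
    rw [← ENNReal.ofReal_ofNat 5, ← ofReal_mul (by norm_num)]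
    exact ofReal_le_ofReal (one_add_sq_rpow_le_five_mul hs₁ hs₂.le hκ hξ)

/-- Let `0 ≤ s < 1` and `G` a nonempty family of measurable
`g : ℝ → [0,∞)` with `sup_{g∈G} ∫ (1+ξ²)^s g(ξ) dξ < ∞`. Then
`lim_{κ→∞} sup_{g∈G} ∫_{|ξ|≥κ} (1+ξ²)^s g(ξ) dξ = 0` iff
`lim_{κ→∞} sup_{g∈G} ∫ ξ² (ξ²+4κ²)^{-(1-s)} g(ξ) dξ = 0`. -/
theorem stmt_17 (s : ℝ) (hs₁ : 0 ≤ s) (hs₂ : s < 1)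
    (G : Set (ℝ → NNReal)) (hG : G.Nonempty)
    (hmeas : ∀ g ∈ G, Measurable g)
    (hM : (⨆ g ∈ G, ∫⁻ ξ : ℝ, ENNReal.ofReal ((1 + ξ ^ 2) ^ s) * (g ξ : ℝ≥0∞)) < ⊤) :
    Tendsto
      (fun κ : ℝ => ⨆ g ∈ G, ∫⁻ ξ : ℝ in {ξ : ℝ | κ ≤ |ξ|},
        ENNReal.ofReal ((1 + ξ ^ 2) ^ s) * (g ξ : ℝ≥0∞))
      atTop (nhds 0)
    ↔ Tendsto
      (fun κ : ℝ => ⨆ g ∈ G, ∫⁻ ξ : ℝ,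
        ENNReal.ofReal (ξ ^ 2 * (ξ ^ 2 + 4 * κ ^ 2) ^ (-(1 - s))) * (g ξ : ℝ≥0∞))
      atTop (nhds 0) :=
  stmt_17_general s hs₁ hs₂ G hM
end
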